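/- arXiv:2005.03183 — 9 statements merged into one kernel-verified Lean document; each statement's English description precedes it below -/
import Mathlib

section
/- Let G be a finite abelian group and D ⊆ G with 0 ∉ D and −D = D. If the character sum ψ(D) takes exactly two distinct values as ψ ranges over non-principal characters of G, then Cay(G,D) is strongly regular. -/
/-!
Write `S ψ = ∑_{x ∈ D} ψ x`. Since `D = -D`, orthogonality of characters gives, for the number
`N g` of pairs `(x, y) ∈ D × D` with `x - y = g`,
`|G| · N g = ∑_ψ (S ψ)² ψ(-g)`.
If `S ψ ∈ {a, b}` for every nontrivial `ψ`, then `(S ψ)² = (a + b) S ψ - a b` away from `ψ = 1`,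
and orthogonality once more turns the right-hand side into `(a + b) |G| [g ∈ D] + c` for a
constant `c`, as long as `g ≠ 0`. So `N g` only depends on whether `g ∈ D`, which is exactly
strong regularity of the Cayley graph, whose common-neighbour counts are the values of `N`.
-/

open scoped Classical

open Finset SimpleGraph

lemma exists_forall_eq_of_forall_eq {α β : Type*} [Nonempty β] {p : α → Prop} {f : α → β}
    (h : ∀ x y, p x → p y → f x = f y) : ∃ b, ∀ x, p x → f x = b := by
  by_cases hp : ∃ x, p x
  · obtain ⟨x₀, hx₀⟩ := hp
    exact ⟨f x₀, fun x hx => h x x₀ hx hx₀⟩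
  · exact ⟨Classical.arbitrary β, fun x hx => (hp ⟨x, hx⟩).elim⟩

section CayleyGraph

variable {G : Type*} [AddCommGroup G] (D : Finset G)

noncomputable def diffCount (g : G) : ℕ := #{y ∈ D | y + g ∈ D}

variable {D}

lemma fromRel_sub_mem_adj_iff (h0 : (0 : G) ∉ D) (hsym : ∀ d ∈ D, -d ∈ D) (x y : G) :
    (fromRel fun x y : G => x - y ∈ D).Adj x y ↔ x - y ∈ D := by
  rw [fromRel_adj]
  refine ⟨fun ⟨_, h⟩ => h.elim id fun h => by simpa using hsym _ h, fun h => ⟨?_, Or.inl h⟩⟩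
  rintro rfl
  exact h0 (by simpa using h)

variable [Fintype G]

lemma isRegularOfDegree_fromRel_sub_mem (h0 : (0 : G) ∉ D) (hsym : ∀ d ∈ D, -d ∈ D) :
    (fromRel fun x y : G => x - y ∈ D).IsRegularOfDegree #D := by
  intro v
  refine card_nbij' (v - ·) (v - ·) (fun z hz => ?_) (fun d hd => ?_)
    (fun z _ => sub_sub_cancel v z) (fun d _ => sub_sub_cancel v d)
  · simpa only [mem_coe, mem_neighborFinset, fromRel_sub_mem_adj_iff h0 hsym] using hz
  · simpa only [mem_coe, mem_neighborFinset, fromRel_sub_mem_adj_iff h0 hsym, sub_sub_cancel]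
      using hd

lemma card_commonNeighbors_fromRel_sub_mem (h0 : (0 : G) ∉ D) (hsym : ∀ d ∈ D, -d ∈ D)
    (v w : G) :
    Fintype.card ((fromRel fun x y : G => x - y ∈ D).commonNeighbors v w) =
      diffCount D (v - w) := by
  rw [← Set.toFinset_card, diffCount]
  have hv : ∀ z, w - z + (v - w) = v - z := fun z => by abel
  refine card_nbij' (w - ·) (w - ·) (fun z hz => ?_) (fun y hy => ?_)
    (fun z _ => sub_sub_cancel w z) (fun y _ => sub_sub_cancel w y)
  · simp only [Set.coe_toFinset, mem_commonNeighbors, fromRel_sub_mem_adj_iff h0 hsym] at hz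
    simpa [hv] using hz.symm
  · simp only [coe_filter, Set.mem_ofPred_eq] at hy
    simp only [Set.coe_toFinset, mem_commonNeighbors, fromRel_sub_mem_adj_iff h0 hsym]
    rw [← hv, sub_sub_cancel]
    exact hy.symm

lemma exists_isSRGWith_fromRel_sub_mem (h0 : (0 : G) ∉ D) (hsym : ∀ d ∈ D, -d ∈ D)
    (h : ∀ g g', g ≠ 0 → g' ≠ 0 → (g ∈ D ↔ g' ∈ D) → diffCount D g = diffCount D g') :
    ∃ l m, (fromRel fun x y : G => x - y ∈ D).IsSRGWith (Fintype.card G) #D l m := by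
  have hD0 : ∀ {g}, g ∈ D → g ≠ 0 := fun hg h => h0 (h ▸ hg)
  obtain ⟨l, hl⟩ := exists_forall_eq_of_forall_eq (p := (· ∈ D)) (f := diffCount D)
    fun g g' hg hg' => h g g' (hD0 hg) (hD0 hg') (iff_of_true hg hg')
  obtain ⟨m, hm⟩ := exists_forall_eq_of_forall_eq (p := fun g => g ≠ 0 ∧ g ∉ D)
    (f := diffCount D) fun g g' hg hg' => h g g' hg.1 hg'.1 (iff_of_false hg.2 hg'.2)
  refine ⟨l, m, rfl, isRegularOfDegree_fromRel_sub_mem h0 hsym, fun v w hvw => ?_,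
    fun v w hne hvw => ?_⟩
  · rw [card_commonNeighbors_fromRel_sub_mem h0 hsym]
    exact hl _ ((fromRel_sub_mem_adj_iff h0 hsym v w).1 hvw)
  · rw [card_commonNeighbors_fromRel_sub_mem h0 hsym]
    exact hm _ ⟨sub_ne_zero.2 hne, mt (fromRel_sub_mem_adj_iff h0 hsym v w).2 hvw⟩

end CayleyGraph

section CharacterSums

variable {G : Type*} [AddCommGroup G] {D : Finset G}

lemma sum_comp_neg_of_neg_mem {M : Type*} [AddCommMonoid M] (hsym : ∀ d ∈ D, -d ∈ D)
    (f : G → M) : ∑ y ∈ D, f (-y) = ∑ y ∈ D, f y :=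
  sum_nbij' (-·) (-·) hsym hsym (fun y _ => neg_neg y) (fun y _ => neg_neg y) fun _ _ => rfl

variable [Fintype G]

lemma sum_addChar_sum_mul_apply_neg (D : Finset G) (g : G) :
    ∑ ψ : AddChar G ℂ, (∑ x ∈ D, ψ x) * ψ (-g) =
      if g ∈ D then (Fintype.card G : ℂ) else 0 := by
  simp_rw [sum_mul, ← AddChar.map_add_eq_mul]
  rw [sum_comm]
  simp_rw [AddChar.sum_apply_eq_ite, add_neg_eq_zero]
  rw [sum_ite_eq']

lemma diffCount_mul_card_eq_sum (hsym : ∀ d ∈ D, -d ∈ D) (g : G) :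
    (diffCount D g : ℂ) * Fintype.card G = ∑ ψ : AddChar G ℂ, (∑ x ∈ D, ψ x) ^ 2 * ψ (-g) :=
  calc (diffCount D g : ℂ) * Fintype.card G
      = ∑ y ∈ D, ∑ ψ : AddChar G ℂ, (∑ x ∈ D, ψ x) * ψ (-(y + g)) := by
        simp_rw [sum_addChar_sum_mul_apply_neg, diffCount, card_filter]
        push_cast
        rw [sum_mul]
        exact sum_congr rfl fun y _ => by split_ifs <;> simp
    _ = ∑ ψ : AddChar G ℂ, (∑ x ∈ D, ψ x) * (∑ y ∈ D, ψ (-y)) * ψ (-g) := by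
        rw [sum_comm]
        refine sum_congr rfl fun ψ _ => ?_
        simp_rw [neg_add, AddChar.map_add_eq_mul, mul_sum, sum_mul]
        exact sum_congr rfl fun y _ => sum_congr rfl fun x _ => by ring
    _ = ∑ ψ : AddChar G ℂ, (∑ x ∈ D, ψ x) ^ 2 * ψ (-g) := by
        simp_rw [sum_comp_neg_of_neg_mem hsym, sq]

lemma diffCount_mul_card_of_sq_eq (hsym : ∀ d ∈ D, -d ∈ D) {a b : ℂ}
    (hquad : ∀ ψ : AddChar G ℂ, ψ ≠ 1 → (∑ x ∈ D, ψ x) ^ 2 = (a + b) * ∑ x ∈ D, ψ x - a * b)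
    {g : G} (hg : g ≠ 0) :
    (diffCount D g : ℂ) * Fintype.card G =
      (a + b) * (if g ∈ D then (Fintype.card G : ℂ) else 0) + (#D ^ 2 - (a + b) * #D + a * b) := by
  set S : AddChar G ℂ → ℂ := fun ψ => ∑ x ∈ D, ψ x
  -- The quadratic relation fails only at the trivial character, where `ψ (-g) = 1`.
  have hdefect : ∑ ψ : AddChar G ℂ, (S ψ ^ 2 - ((a + b) * S ψ - a * b)) * ψ (-g) =
      #D ^ 2 - (a + b) * #D + a * b := by
    rw [Fintype.sum_eq_single 1 fun ψ hψ => by simp [S, hquad ψ hψ]]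
    simp only [S, AddChar.one_apply, sum_const, nsmul_eq_mul, mul_one]
    ring
  have hconst : ∑ ψ : AddChar G ℂ, ψ (-g) = 0 := by
    simp [AddChar.sum_apply_eq_ite, hg]
  rw [diffCount_mul_card_eq_sum hsym, ← hdefect, ← sum_addChar_sum_mul_apply_neg]
  simp only [S, sub_mul, sum_sub_distrib, mul_assoc, ← mul_sum, hconst]
  ring

end CharacterSums

theorem stmt_3 {G : Type*} [AddCommGroup G] [Fintype G]
    (D : Finset G) (h0 : (0 : G) ∉ D) (hsym : ∀ d ∈ D, -d ∈ D)
    (htwo : ∃ a b : ℂ, a ≠ b ∧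
      {v : ℂ | ∃ ψ : AddChar G ℂ, ψ ≠ 1 ∧ v = ∑ x ∈ D, ψ x} = {a, b}) :
    ∃ k l μ : ℕ,
      (SimpleGraph.fromRel fun x y : G => x - y ∈ D).IsSRGWith (Fintype.card G) k l μ := by
  obtain ⟨a, b, -, hset⟩ := htwo
  have hquad : ∀ ψ : AddChar G ℂ, ψ ≠ 1 →
      (∑ x ∈ D, ψ x) ^ 2 = (a + b) * ∑ x ∈ D, ψ x - a * b := by
    intro ψ hψ
    have hab : ∑ x ∈ D, ψ x ∈ ({a, b} : Set ℂ) := hset ▸ ⟨ψ, hψ, rfl⟩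
    rcases hab with h | h <;> rw [h] <;> ring
  refine ⟨#D, exists_isSRGWith_fromRel_sub_mem h0 hsym fun g g' hg hg' hmem => ?_⟩
  have hcard : (Fintype.card G : ℂ) ≠ 0 := Nat.cast_ne_zero.2 Fintype.card_ne_zero
  have hcount := diffCount_mul_card_of_sq_eq hsym hquad hg
  have hcount' := diffCount_mul_card_of_sq_eq hsym hquad hg'
  rw [if_congr hmem rfl rfl, ← hcount'] at hcount
  exact_mod_cast mul_right_cancel₀ hcard hcount
end

section
/- Let q be a prime power and let C_i^{(q²+1,q⁴)} = ω^i⟨ω^{q²+1}⟩ be the (q²+1)-th cyclotomic classes of F_{q⁴} for a primitive element ω. Then the canonical additive character ψ of F_{q⁴} satisfies ψ(C_i^{(q²+1,q⁴)}) = q²−1 if i = (q²+1)/2, and ψ(C_i^{(q²+1,q⁴)}) = −1 otherwise. -/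
open scoped Classical

noncomputable section

/-- The canonical additive character of a finite field `F` of characteristic `p`:
`ψ(x) = exp(2πi · Tr_{F/F_p}(x) / p)`. -/
def canChar (p : ℕ) (F : Type*) [Field F] [Fintype F] [Algebra (ZMod p) F] (x : F) : ℂ :=
  Complex.exp (2 * Real.pi * Complex.I * ((Algebra.trace (ZMod p) F x).val : ℂ) / p)

/-- The cyclotomic class `C_i^{(N,q)} = ω^i ⟨ω^N⟩`. -/
def cycl {F : Type*} [Field F] [Fintype F] (ω : F) (N i : ℕ) : Finset F :=
  Finset.univ.filter fun x => ∃ k : ℕ, x = ω ^ (i + N * k)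

/-
Write `r = q²`, so that `F` is a quadratic extension of `F_r = {x | x ^ r = x}`. Since
`ω ^ (r + 1)` generates `F_rˣ`, the class `C_i` is `ω ^ i • F_rˣ`, hence
`ψ(C_i) = ∑_{y ∈ F_r} ψ(ω ^ i y) - 1`, which is `r - 1` or `-1` according as `y ↦ ψ(ω ^ i y)`
is trivial on `F_r` or not. For `a = ω ^ ((r + 1) / 2)` we have `a ^ r = -a`, so for `y ∈ F_r`
the Frobenius invariance of the trace gives `Tr(a y) = Tr((a y) ^ r) = -Tr(a y)`, i.e.
`Tr(a y) = 0` as `p` is odd. Finally the classes partition `Fˣ` and `∑_{x ≠ 0} ψ(x) = -1`, so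
exactly one class is trivial.
-/

open Finset Polynomial

namespace AddChar

variable {G R : Type*} [AddGroup G] [CommRing R] [IsDomain R]

lemma sum_eq_ite_of_add_mem (ψ : AddChar G R) {s : Finset G} [Decidable (∀ x ∈ s, ψ x = 1)]
    (hs : ∀ x ∈ s, ∀ y ∈ s, x + y ∈ s) :
    ∑ x ∈ s, ψ x = if ∀ x ∈ s, ψ x = 1 then (#s : R) else 0 := by
  split_ifs with htriv
  · simp [sum_congr rfl htriv]
  push Not at htriv
  obtain ⟨a, ha, hψa⟩ := htriv
  have hmap : s.map (addLeftEmbedding a) = s :=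
    eq_of_subset_of_card_le
      (fun _ hy => by obtain ⟨x, hx, rfl⟩ := mem_map.1 hy; exact hs a ha x hx) (card_map _).ge
  refine eq_zero_of_mul_eq_self_left hψa ?_
  conv_rhs => rw [← hmap]
  simp [mul_sum, map_add_eq_mul]

end AddChar

section CanonicalCharacter

variable (p : ℕ) [Fact p.Prime] (F : Type*) [Field F] [Fintype F] [Algebra (ZMod p) F]

def canAddChar : AddChar F ℂ :=
  ZMod.stdAddChar.compAddMonoidHom (Algebra.trace (ZMod p) F).toAddMonoidHom

lemma canAddChar_apply (x : F) : canAddChar p F x = canChar p F x := by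
  simp [canAddChar, canChar, ZMod.stdAddChar_apply, ZMod.toCircle_apply]

lemma canAddChar_ne_one : canAddChar p F ≠ 1 := by
  obtain ⟨x, hx⟩ := Algebra.trace_surjective (ZMod p) F 1
  refine AddChar.ne_one_iff.2
    ⟨x, fun h => one_ne_zero (ZMod.injective_stdAddChar (N := p) ?_)⟩
  simpa [canAddChar, hx] using h

variable {p F}

lemma trace_pow_prime_pow (e : ℕ) (x : F) :
    Algebra.trace (ZMod p) F (x ^ p ^ e) = Algebra.trace (ZMod p) F x := by
  have h := Algebra.trace_eq_of_algEquiv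
    (FiniteField.frobeniusAlgEquivOfAlgebraic (ZMod p) F ^ e) x
  rwa [AlgEquiv.coe_pow, FiniteField.coe_frobeniusAlgEquivOfAlgebraic_iterate, ZMod.card] at h

lemma canAddChar_eq_one_of_pow_eq_neg (hp : p ≠ 2) {e : ℕ} {x : F} (hx : x ^ p ^ e = -x) :
    canAddChar p F x = 1 := by
  have htr : -Algebra.trace (ZMod p) F x = Algebra.trace (ZMod p) F x := by
    rw [← map_neg, ← hx, trace_pow_prime_pow]
  obtain h | h := (ZMod.neg_eq_self_iff _).1 htr
  · simp [canAddChar, h]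
  · have := (Fact.out : p.Prime).eq_one_or_self_of_dvd 2 ⟨_, h.symm⟩
    omega

end CanonicalCharacter

lemma zero_notMem_nthRootsFinset {R : Type*} [CommRing R] [IsDomain R] {n : ℕ} (hn : 0 < n)
    {a : R} (ha : a ≠ 0) : 0 ∉ nthRootsFinset n a := by
  simp [mem_nthRootsFinset hn, zero_pow hn.ne', ha.symm]

lemma one_lt_of_card_eq_sq {F : Type*} [Fintype F] [Nontrivial F] {r : ℕ}
    (hcard : Fintype.card F = r ^ 2) : 1 < r := by
  have := Fintype.one_lt_card (α := F)
  rw [hcard] at this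
  by_contra! h
  interval_cases r <;> simp at this

section CyclotomicClasses

variable {F : Type*} [Field F] [Fintype F] {ω : F} {N : ℕ}

lemma IsPrimitiveRoot.of_forall_eq_pow (hF : 2 < Fintype.card F)
    (hω : ∀ x : F, x ≠ 0 → ∃ k : ℕ, x = ω ^ k) : IsPrimitiveRoot ω (Fintype.card F - 1) := by
  have hω0 : ω ≠ 0 := by
    rintro rfl
    have hsub : univ ⊆ ({0, 1} : Finset F) := fun x _ => by
      rcases eq_or_ne x 0 with rfl | hx
      · simp
      obtain ⟨k, rfl⟩ := hω x hx
      rcases k.eq_zero_or_pos with rfl | hk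
      · simp
      · simp [zero_pow hk.ne']
    have := (card_le_card hsub).trans card_le_two
    simp at this
    omega
  have hgen : ∀ v : Fˣ, v ∈ Subgroup.zpowers (Units.mk0 ω hω0) := fun v => by
    obtain ⟨k, hk⟩ := hω v v.ne_zero
    exact ⟨k, Units.ext (by simp [hk])⟩
  rw [← Fintype.card_units, ← Nat.card_eq_fintype_card,
    ← orderOf_eq_card_of_forall_mem_zpowers hgen]
  exact IsPrimitiveRoot.coe_units_iff.2 (.orderOf (Units.mk0 ω hω0))

lemma mem_cycl {j : ℕ} {x : F} : x ∈ cycl ω N j ↔ ∃ k, x = ω ^ (j + N * k) := by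
  simp [cycl]

lemma cycl_eq_image_mul (ω : F) (N j : ℕ) :
    cycl ω N j = (cycl ω N 0).image (ω ^ j * ·) := by
  ext x
  simp [mem_cycl, pow_add, eq_comm]

lemma cycl_zero_eq_nthRootsFinset {M : ℕ} (hω : IsPrimitiveRoot ω (N * M)) (hN : 0 < N)
    (hM : 0 < M) : cycl ω N 0 = nthRootsFinset M (1 : F) := by
  have hζ : IsPrimitiveRoot (ω ^ N) M := hω.pow (by positivity) rfl
  have : NeZero M := ⟨hM.ne'⟩
  ext x
  rw [mem_cycl, mem_nthRootsFinset hM]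
  constructor
  · rintro ⟨k, rfl⟩
    rw [zero_add, pow_mul, pow_right_comm, hζ.pow_eq_one, one_pow]
  · intro hx
    obtain ⟨k, -, rfl⟩ := hζ.eq_pow_of_pow_eq_one hx
    exact ⟨k, by rw [zero_add, pow_mul]⟩

lemma pairwiseDisjoint_cycl (hω : IsPrimitiveRoot ω (Fintype.card F - 1))
    (hN : N ∣ Fintype.card F - 1) :
    (range N : Set ℕ).PairwiseDisjoint (cycl ω N) := by
  intro i hi j hj hij
  refine disjoint_left.2 fun x hxi hxj => hij ?_
  obtain ⟨k, rfl⟩ := mem_cycl.1 hxi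
  obtain ⟨l, hl⟩ := mem_cycl.1 hxj
  have hF : Fintype.card F - 1 ≠ 0 := by have := Fintype.one_lt_card (α := F); omega
  have h := ((hω.isOfFinOrder hF).pow_eq_pow_iff_modEq.1 hl).of_dvd (hω.eq_orderOf ▸ hN)
  simpa [Nat.ModEq, Nat.mod_eq_of_lt (mem_range.1 hi), Nat.mod_eq_of_lt (mem_range.1 hj)]
    using h

lemma biUnion_cycl (hω : IsPrimitiveRoot ω (Fintype.card F - 1)) (hN : 0 < N) :
    (range N).biUnion (cycl ω N) = univ.erase 0 := by
  have hF : Fintype.card F - 1 ≠ 0 := by have := Fintype.one_lt_card (α := F); omega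
  have : NeZero (Fintype.card F - 1) := ⟨hF⟩
  ext x
  simp only [mem_biUnion, mem_range, mem_erase, mem_univ, and_true, mem_cycl]
  constructor
  · rintro ⟨j, -, k, rfl⟩
    exact pow_ne_zero _ (hω.ne_zero hF)
  · intro hx
    obtain ⟨k, -, rfl⟩ := hω.eq_pow_of_pow_eq_one (FiniteField.pow_card_sub_one_eq_one x hx)
    exact ⟨k % N, Nat.mod_lt _ hN, k / N, by rw [Nat.mod_add_div]⟩

lemma sum_range_sum_cycl {R : Type*} [CommRing R] [IsDomain R] (ψ : AddChar F R) (hψ : ψ ≠ 1)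
    (hω : IsPrimitiveRoot ω (Fintype.card F - 1)) (hN : N ∣ Fintype.card F - 1) :
    ∑ j ∈ range N, ∑ x ∈ cycl ω N j, ψ x = -1 := by
  have hN0 : 0 < N := Nat.pos_of_dvd_of_pos hN (by have := Fintype.one_lt_card (α := F); omega)
  rw [← sum_biUnion (pairwiseDisjoint_cycl hω hN), biUnion_cycl hω hN0,
    sum_erase_eq_sub (mem_univ _), AddChar.sum_eq_zero_of_ne_one hψ, AddChar.map_zero_eq_one,
    zero_sub]

end CyclotomicClasses

section PowFixed

variable {F : Type*} [Field F] [Fintype F] {r : ℕ}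

variable (F) in
def powFixed (r : ℕ) : Finset F := {x | x ^ r = x}

lemma mem_powFixed {x : F} : x ∈ powFixed F r ↔ x ^ r = x := by
  simp [powFixed]


lemma powFixed_eq_insert_nthRootsFinset (hr : 1 < r) :
    powFixed F r = insert 0 (nthRootsFinset (r - 1) (1 : F)) := by
  ext x
  obtain ⟨s, rfl⟩ : ∃ s, r = s + 1 := ⟨r - 1, by omega⟩
  rw [mem_powFixed, mem_insert, mem_nthRootsFinset (by omega), Nat.add_sub_cancel, pow_succ]
  rcases eq_or_ne x 0 with rfl | hx
  · simp
  · simp [mul_eq_right₀ hx, hx]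

lemma card_powFixed {ζ : F} (hζ : IsPrimitiveRoot ζ (r - 1)) (hr : 1 < r) :
    #(powFixed F r) = r := by
  rw [powFixed_eq_insert_nthRootsFinset hr,
    card_insert_of_notMem (zero_notMem_nthRootsFinset (by omega) one_ne_zero),
    hζ.card_nthRootsFinset]
  omega

lemma add_mem_powFixed (p : ℕ) [Fact p.Prime] [CharP F p] (e : ℕ) {x y : F}
    (hx : x ∈ powFixed F (p ^ e)) (hy : y ∈ powFixed F (p ^ e)) :
    x + y ∈ powFixed F (p ^ e) := by
  rw [mem_powFixed] at *
  rw [add_pow_char_pow, hx, hy]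

lemma sum_cycl_eq_sum_powFixed_sub_one {R : Type*} [CommRing R] (ψ : AddChar F R) {ω : F}
    (hω : IsPrimitiveRoot ω ((r + 1) * (r - 1))) (hr : 1 < r) (j : ℕ) :
    ∑ x ∈ cycl ω (r + 1) j, ψ x = ∑ y ∈ powFixed F r, ψ (ω ^ j * y) - 1 := by
  have hω0 : ω ≠ 0 := hω.ne_zero (Nat.mul_ne_zero (by omega) (by omega))
  rw [powFixed_eq_insert_nthRootsFinset hr,
    sum_insert (zero_notMem_nthRootsFinset (by omega) one_ne_zero), mul_zero,
    AddChar.map_zero_eq_one, ← cycl_zero_eq_nthRootsFinset hω (by omega) (by omega),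
    cycl_eq_image_mul ω _ j, sum_image fun _ _ _ _ h => mul_left_cancel₀ (pow_ne_zero j hω0) h]
  ring

end PowFixed

lemma eq_of_sum_ite_sub_one_eq_neg_one {P : ℕ → Prop} [DecidablePred P] {r : ℕ} (hr : r ≠ 0)
    (h : ∑ j ∈ range (r + 1), ((if P j then (r : ℂ) else 0) - 1) = -1) {a b : ℕ}
    (ha : a ≤ r) (hb : b ≤ r) (hPa : P a) (hPb : P b) : a = b := by
  rw [sum_sub_distrib, ← sum_filter, sum_const, sum_const, card_range, nsmul_eq_mul,
    nsmul_eq_mul] at h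
  have hr0 : (r : ℂ) ≠ 0 := by exact_mod_cast hr
  have hcount : ((#((range (r + 1)).filter P) : ℕ) : ℂ) = 1 :=
    mul_right_cancel₀ hr0 (by push_cast at h; linear_combination h)
  norm_cast at hcount
  obtain ⟨m, hm⟩ := card_eq_one.1 hcount
  have hmem {j : ℕ} (hj : j ≤ r) (hPj : P j) : j = m :=
    mem_singleton.1 (hm ▸ mem_filter.2 ⟨mem_range.2 (Nat.lt_succ_of_le hj), hPj⟩)
  rw [hmem ha hPa, hmem hb hPb]

section QuadraticExtension

variable {p : ℕ} [Fact p.Prime] {F : Type*} [Field F] [Fintype F] [Algebra (ZMod p) F]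
  {r : ℕ} {ω : F}

lemma exists_eq_prime_pow_of_card_eq_sq (hcard : Fintype.card F = r ^ 2) :
    ∃ e, r = p ^ e := by
  have : CharP F p := charP_of_injective_algebraMap (algebraMap (ZMod p) F).injective p
  obtain ⟨n, hp, hn⟩ := FiniteField.card F p
  obtain ⟨e, -, he⟩ := (Nat.dvd_prime_pow hp).1 (hn ▸ hcard ▸ Dvd.intro r (sq r).symm)
  exact ⟨e, he⟩

omit [Fintype F] in
lemma IsPrimitiveRoot.pow_succ_div_two_pow_eq_neg (hω : IsPrimitiveRoot ω (r ^ 2 - 1))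
    (hodd : Odd r) (hr : 1 < r) :
    (ω ^ ((r + 1) / 2)) ^ r = -ω ^ ((r + 1) / 2) := by
  obtain ⟨k, rfl⟩ := hodd
  have hsq : 0 < (2 * k + 1) ^ 2 - 1 := Nat.sub_pos_of_lt (Nat.one_lt_pow two_ne_zero hr)
  have hneg : ω ^ ((k + 1) * (2 * k)) = -1 :=
    (hω.pow hsq (Nat.sub_eq_of_eq_add (by ring))).eq_neg_one_of_two_right
  rw [show (2 * k + 1 + 1) / 2 = k + 1 by omega, ← pow_mul,
    show (k + 1) * (2 * k + 1) = (k + 1) * (2 * k) + (k + 1) by ring, pow_add, hneg, neg_one_mul]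

variable (p) in
lemma sum_cycl_canAddChar_eq_ite (hcard : Fintype.card F = r ^ 2)
    (hω : IsPrimitiveRoot ω (Fintype.card F - 1)) (j : ℕ) :
    ∑ x ∈ cycl ω (r + 1) j, canAddChar p F x =
      (if ∀ y ∈ powFixed F r, canAddChar p F (ω ^ j * y) = 1 then (r : ℂ) else 0) - 1 := by
  have : CharP F p := charP_of_injective_algebraMap (algebraMap (ZMod p) F).injective p
  have hr := one_lt_of_card_eq_sq hcard
  rw [hcard, show r ^ 2 - 1 = (r + 1) * (r - 1) by simpa using Nat.sq_sub_sq r 1] at hω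
  obtain ⟨e, rfl⟩ := exists_eq_prime_pow_of_card_eq_sq (p := p) hcard
  have hsum := AddChar.sum_eq_ite_of_add_mem ((canAddChar p F).mulShift (ω ^ j))
    fun x hx y hy => add_mem_powFixed p e hx hy
  rw [card_powFixed (hω.pow (Nat.mul_pos (by omega) (by omega)) rfl) hr] at hsum
  rw [sum_cycl_eq_sum_powFixed_sub_one _ hω hr]
  exact congrArg (· - 1) hsum

lemma forall_canAddChar_mul_eq_one_iff (hodd : Odd r) (hcard : Fintype.card F = r ^ 2)
    (hω : IsPrimitiveRoot ω (Fintype.card F - 1)) {i : ℕ} (hi : i ≤ r) :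
    (∀ y ∈ powFixed F r, canAddChar p F (ω ^ i * y) = 1) ↔ i = (r + 1) / 2 := by
  have hr := one_lt_of_card_eq_sq hcard
  have hhalf : ∀ y ∈ powFixed F r, canAddChar p F (ω ^ ((r + 1) / 2) * y) = 1 := by
    obtain ⟨e, rfl⟩ := exists_eq_prime_pow_of_card_eq_sq (p := p) hcard
    have hp : p ≠ 2 := by
      rintro rfl
      exact Nat.not_even_iff_odd.2 hodd (Nat.even_pow.2 ⟨even_two, by rintro rfl; simp at hr⟩)
    refine fun y hy => canAddChar_eq_one_of_pow_eq_neg hp (e := e) ?_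
    rw [mul_pow, IsPrimitiveRoot.pow_succ_div_two_pow_eq_neg (hcard ▸ hω) hodd hr,
      mem_powFixed.1 hy, neg_mul]
  have hsum := sum_range_sum_cycl (N := r + 1) _ (canAddChar_ne_one p F) hω
    (by rw [hcard]; exact Dvd.intro _ (by simpa using (Nat.sq_sub_sq r 1).symm))
  simp_rw [sum_cycl_canAddChar_eq_ite p hcard hω] at hsum
  exact ⟨fun hi' => eq_of_sum_ite_sub_one_eq_neg_one (by omega) hsum hi (by omega) hi' hhalf,
    fun h => h ▸ hhalf⟩

theorem sum_canChar_cycl_eq_ite (hodd : Odd r) (hcard : Fintype.card F = r ^ 2)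
    (hω : IsPrimitiveRoot ω (Fintype.card F - 1)) {i : ℕ} (hi : i ≤ r) :
    ∑ x ∈ cycl ω (r + 1) i, canChar p F x = if i = (r + 1) / 2 then (r : ℂ) - 1 else -1 := by
  simp_rw [← canAddChar_apply, sum_cycl_canAddChar_eq_ite p hcard hω,
    forall_canAddChar_mul_eq_one_iff hodd hcard hω hi]
  split_ifs <;> ring

end QuadraticExtension

theorem stmt_4_general (p : ℕ) [Fact p.Prime] (q : ℕ)
    (hodd : Odd q) {F : Type*} [Field F] [Fintype F] [Algebra (ZMod p) F]
    (hcard : Fintype.card F = q ^ 4)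
    (ω : F) (hω : ∀ x : F, x ≠ 0 → ∃ k : ℕ, x = ω ^ k)
    (i : ℕ) (hi : i ≤ q ^ 2) :
    ∑ x ∈ cycl ω (q ^ 2 + 1) i, canChar p F x =
      if i = (q ^ 2 + 1) / 2 then ((q : ℂ) ^ 2 - 1) else -1 := by
  have hcard' : Fintype.card F = (q ^ 2) ^ 2 := by rw [hcard]; ring
  have hF : 2 < Fintype.card F := by
    have := one_lt_of_card_eq_sq hcard'
    rw [hcard']; nlinarith
  simpa using sum_canChar_cycl_eq_ite (p := p) hodd.pow hcard'
    (IsPrimitiveRoot.of_forall_eq_pow hF hω) hi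

theorem stmt_4 (p : ℕ) [Fact p.Prime] (f : ℕ) (hf : 0 < f) (q : ℕ) (hq : q = p ^ f)
    (hodd : Odd q) {F : Type*} [Field F] [Fintype F] [Algebra (ZMod p) F]
    (hcard : Fintype.card F = q ^ 4)
    (ω : F) (hω : ∀ x : F, x ≠ 0 → ∃ k : ℕ, x = ω ^ k)
    (i : ℕ) (hi : i ≤ q ^ 2) :
    ∑ x ∈ cycl ω (q ^ 2 + 1) i, canChar p F x =
      if i = (q ^ 2 + 1) / 2 then ((q : ℂ) ^ 2 - 1) else -1 :=
  stmt_4_general p q hodd hcard ω hω i hi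
end
end

section
/- Let G be a finite abelian group of order u² containing 2m² building blocks ⊤(x,y) and ⊥(x,y), x,y ∈ Z_m, satisfying conditions (1)–(4). Then the sets S_x, x ∈ Z_m, are pairwise disjoint. -/
open scoped Classical

noncomputable section

/-- Indicator function of a finset, with values in `ℤ`. -/
def ind {α : Type*} (D : Finset α) (g : α) : ℤ := if g ∈ D then 1 else 0

/-- Character sum `ψ(D) = ∑_{x ∈ D} ψ(x)`. -/
def charSum {G : Type*} [AddCommGroup G] (ψ : AddChar G ℂ) (D : Finset G) : ℂ :=
  ∑ g ∈ D, ψ g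

/-- Condition (1): cardinalities of the building blocks. -/
def Cond1 {G : Type*} (m u : ℕ) (T B : ZMod m → ZMod m → Finset G) : Prop :=
  ∀ x y : ZMod m,
    (y ≠ 0 → ((T x y).card : ℚ) = ((u : ℚ) ^ 2 - u) / m ∧
             ((B x y).card : ℚ) = ((u : ℚ) ^ 2 - u) / m) ∧
    (y = 0 → ((T x y).card : ℚ) = ((u : ℚ) ^ 2 - u) / m + u ∧
             ((B x y).card : ℚ) = ((u : ℚ) ^ 2 - u) / m + u)

/-- Condition (2): for each family and each `x, y`, the translates
`♯(x−z, y+z)`, `z ∈ Z_m`, partition `G`. -/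
def Cond2 {G : Type*} (m : ℕ) (T B : ZMod m → ZMod m → Finset G) : Prop :=
  ∀ x y : ZMod m, ∀ g : G,
    (∃! z : ZMod m, g ∈ T (x - z) (y + z)) ∧ (∃! z : ZMod m, g ∈ B (x - z) (y + z))

/-- Condition (3): the character value condition. The boolean in the triple selects
the family (`true` for `⊤`, `false` for `⊥`). -/
def Cond3 {G : Type*} [AddCommGroup G] (m u : ℕ) (T B : ZMod m → ZMod m → Finset G) : Prop :=
  ∀ ψ : AddChar G ℂ, ψ ≠ 1 →
    ∃! t : ZMod m × ZMod m × Bool,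
      (∀ y : ZMod m, y ≠ t.2.1 → charSum ψ ((cond t.2.2 T B) t.1 y) = -(u : ℂ)) ∧
      (∀ x : ZMod m, x ≠ t.1 → charSum ψ ((cond t.2.2 T B) x t.2.1) = (u : ℂ)) ∧
      (∀ x y : ZMod m, (x = t.1 ↔ y = t.2.1) → charSum ψ ((cond t.2.2 T B) x y) = 0) ∧
      (∀ x y : ZMod m, charSum ψ ((cond (!t.2.2) T B) x y) = 0)

/-- `S` is the set `S_x` from condition (4): `0 ∉ S` and
`∑_{y}(⊤(x,y)+⊥(x,y)) = m·S + G + [0_G]` in the group ring `ℤ[G]`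
(stated coefficientwise). -/
def IsSFor {G : Type*} [AddCommGroup G] [Fintype G] (m : ℕ) [NeZero m]
    (T B : ZMod m → ZMod m → Finset G) (x : ZMod m) (S : Finset G) : Prop :=
  (0 : G) ∉ S ∧ ∀ g : G,
    (∑ y : ZMod m, (ind (T x y) g + ind (B x y) g)) =
      m * ind S g + 1 + (if g = 0 then 1 else 0)

/-- Condition (4). -/
def Cond4 {G : Type*} [AddCommGroup G] [Fintype G] (m : ℕ) [NeZero m]
    (T B : ZMod m → ZMod m → Finset G) : Prop :=
  ∀ x : ZMod m, ∃ S : Finset G, IsSFor m T B x S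

/-- `Tset` is the set `T_{y₁,y₂}` from condition (5): `0 ∉ Tset` and
`∑_{x}(⊤(x,y₁)+⊥(x,y₂)) = m·Tset + G + δ'·[0_G]` in `ℤ[G]`, where `δ' = −1` if
`y₁ ≠ 0 ≠ y₂`, `δ' = 2m−1` if `y₁ = y₂ = 0`, and `δ' = m−1` otherwise. -/
def IsTFor {G : Type*} [AddCommGroup G] [Fintype G] (m : ℕ) [NeZero m]
    (T B : ZMod m → ZMod m → Finset G) (y₁ y₂ : ZMod m) (Tset : Finset G) : Prop :=
  (0 : G) ∉ Tset ∧ ∀ g : G,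
    (∑ x : ZMod m, (ind (T x y₁) g + ind (B x y₂) g)) =
      m * ind Tset g + 1 +
        (if y₁ ≠ 0 ∧ y₂ ≠ 0 then (-1 : ℤ)
         else if y₁ = 0 ∧ y₂ = 0 then 2 * (m : ℤ) - 1 else (m : ℤ) - 1) *
          (if g = 0 then 1 else 0)

/-- Condition (5). -/
def Cond5 {G : Type*} [AddCommGroup G] [Fintype G] (m : ℕ) [NeZero m]
    (T B : ZMod m → ZMod m → Finset G) : Prop :=
  ∀ y₁ y₂ : ZMod m, ∃ Tset : Finset G, IsTFor m T B y₁ y₂ Tset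

lemma sum_ind_unique {α : Type*} [Fintype α] (p : α → Prop) (h : ∃! a, p a) :
    ∑ a, (if p a then (1:ℤ) else 0) = 1 := by
  obtain ⟨a, ha, hu⟩ := h
  rw [Finset.sum_eq_single a]
  · simp [ha]
  · intro b _ hb
    exact if_neg (fun hpb => hb (hu b hpb))
  · simp

lemma sum_pairs {G : Type*} (m : ℕ) [NeZero m] (T : ZMod m → ZMod m → Finset G) (g : G)
    (h : ∀ x y : ZMod m, ∃! z : ZMod m, g ∈ T (x - z) (y + z)) :
    ∑ x : ZMod m, ∑ y : ZMod m, ind (T x y) g = m := by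
  have key : ∀ s : ZMod m, ∑ z : ZMod m, ind (T (s - z) z) g = 1 := by
    intro s
    have hs := h s 0
    simp only [zero_add] at hs
    obtain ⟨z0, hz0, huniq⟩ := hs
    rw [Finset.sum_eq_single z0]
    · unfold ind; rw [if_pos hz0]
    · intro b _ hb
      unfold ind; exact if_neg (fun hpb => hb (huniq b hpb))
    · simp
  let e : ZMod m × ZMod m ≃ ZMod m × ZMod m :=
    ⟨fun q => (q.1 - q.2, q.2), fun p => (p.1 + p.2, p.2),
      fun q => by simp, fun p => by simp⟩
  calc ∑ x : ZMod m, ∑ y : ZMod m, ind (T x y) g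
      = ∑ p : ZMod m × ZMod m, ind (T p.1 p.2) g := by
        rw [Fintype.sum_prod_type]
    _ = ∑ q : ZMod m × ZMod m, ind (T (q.1 - q.2) q.2) g :=
        (Fintype.sum_equiv e (fun q : ZMod m × ZMod m => ind (T (q.1 - q.2) q.2) g)
          (fun p : ZMod m × ZMod m => ind (T p.1 p.2) g) (fun q => by rfl)).symm
    _ = ∑ s : ZMod m, ∑ z : ZMod m, ind (T (s - z) z) g := by
        rw [Fintype.sum_prod_type]
    _ = ∑ s : ZMod m, (1 : ℤ) := by
        exact Finset.sum_congr rfl (fun s _ => key s)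
    _ = m := by simp

theorem stmt_8 {G : Type*} [AddCommGroup G] [Fintype G] (m u : ℕ) [NeZero m]
    (hu : Fintype.card G = u ^ 2)
    (T B : ZMod m → ZMod m → Finset G)
    (h1 : Cond1 m u T B) (h2 : Cond2 m T B) (h3 : Cond3 m u T B) (h4 : Cond4 m T B) :
    ∀ x x' : ZMod m, x ≠ x' → ∀ S S' : Finset G,
      IsSFor m T B x S → IsSFor m T B x' S' → Disjoint S S' := by
  intro x x' hxx' S S' hS hS'
  rw [Finset.disjoint_left]
  intro g hgS hgS'
  have hg0 : g ≠ 0 := fun h => hS.1 (h ▸ hgS)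
  set f : ZMod m → ℤ := fun w => ∑ y : ZMod m, (ind (T w y) g + ind (B w y) g) with hf
  -- total sum is 2m
  have hsumT : ∑ w : ZMod m, ∑ y : ZMod m, ind (T w y) g = m :=
    sum_pairs m T g (fun a b => (h2 a b g).1)
  have hsumB : ∑ w : ZMod m, ∑ y : ZMod m, ind (B w y) g = m :=
    sum_pairs m B g (fun a b => (h2 a b g).2)
  have htotal : ∑ w : ZMod m, f w = 2 * m := by
    simp only [hf, Finset.sum_add_distrib, hsumT, hsumB]
    ring
  -- each f w ≥ 1
  have hlb : ∀ w : ZMod m, 1 ≤ f w := by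
    intro w
    obtain ⟨Sw, hSw⟩ := h4 w
    have := hSw.2 g
    rw [if_neg hg0] at this
    have hind : (0:ℤ) ≤ ind Sw g := by unfold ind; split <;> norm_num
    have : f w = m * ind Sw g + 1 := by rw [hf]; simpa using this
    nlinarith
  -- f x = m + 1 and f x' = m + 1
  have hfx : f x = m + 1 := by
    have := hS.2 g
    rw [if_neg hg0] at this
    have h1 : ind S g = 1 := by unfold ind; rw [if_pos hgS]
    rw [hf]; simpa [h1] using this
  have hfx' : f x' = m + 1 := by
    have := hS'.2 g
    rw [if_neg hg0] at this
    have h1 : ind S' g = 1 := by unfold ind; rw [if_pos hgS']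
    rw [hf]; simpa [h1] using this
  -- contradiction: sum ≥ 2(m+1) + (m-2) = 3m > 2m
  have hrest : ∑ w ∈ (Finset.univ \ {x, x'} : Finset (ZMod m)), f w
      ≥ ∑ w ∈ (Finset.univ \ {x, x'} : Finset (ZMod m)), (1:ℤ) :=
    Finset.sum_le_sum (fun w _ => hlb w)
  have hsplit : ∑ w : ZMod m, f w
      = f x + f x' + ∑ w ∈ (Finset.univ \ {x, x'} : Finset (ZMod m)), f w := by
    have hsub : ({x, x'} : Finset (ZMod m)) ⊆ Finset.univ := Finset.subset_univ _
    rw [← Finset.sum_sdiff hsub, Finset.sum_pair hxx']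
    ring
  have hcard : ((Finset.univ \ {x, x'} : Finset (ZMod m)).card : ℤ) = (m : ℤ) - 2 := by
    rw [Finset.card_sdiff_of_subset (Finset.subset_univ _), Finset.card_pair hxx']
    have hm : 2 ≤ Fintype.card (ZMod m) := by
      rw [ZMod.card]
      by_contra h
      push_neg at h
      interval_cases m
      · exact (NeZero.ne 0) rfl
      · exact hxx' (Subsingleton.elim x x')
    have : (Finset.univ : Finset (ZMod m)).card = m := by simp [ZMod.card]
    rw [this]
    rw [ZMod.card] at hm
    omega
  rw [Finset.sum_const, nsmul_eq_mul, mul_one] at hrest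
  rw [hsplit, hfx, hfx'] at htotal
  have hm1 : 1 ≤ (m : ℤ) := by exact_mod_cast Nat.one_le_iff_ne_zero.mpr (NeZero.ne m)
  omega
end
end

section
/- Let G be a finite abelian group of order u² containing 2m² building blocks ⊤(x,y) and ⊥(x,y), x,y ∈ Z_m, satisfying conditions (1)–(4). Then for every non-principal character ψ of G and every x ∈ Z_m, ψ(S_x) equals either (u−1)/m or (−(m−1)u−1)/m. Consequently each S_x is a partial difference set in G. -/
open scoped Classical

noncomputable section

section AuxProof

open Finset

variable {G : Type*} [AddCommGroup G] [Fintype G]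

lemma charSum_one_eq (D : Finset G) : charSum (1 : AddChar G ℂ) D = D.card := by
  simp [charSum]

lemma sum_ind_mul_char (D : Finset G) (ψ : AddChar G ℂ) :
    ∑ g : G, (ind D g : ℂ) * ψ g = charSum ψ D := by
  rw [charSum]
  rw [Finset.sum_congr rfl (fun g _ => by
    simp only [ind, apply_ite (fun z : ℤ => (z : ℂ)), Int.cast_one, Int.cast_zero, ite_mul,
      one_mul, zero_mul] : ∀ g ∈ (Finset.univ : Finset G),
        (ind D g : ℂ) * ψ g = if g ∈ D then ψ g else 0)]
  rw [Finset.sum_ite_mem, Finset.univ_inter]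

lemma sum_charSum_mul_char (D : Finset G) (g : G) :
    ∑ ψ : AddChar G ℂ, charSum ψ D * ψ (-g) = (Fintype.card G : ℂ) * ind D g := by
  classical
  simp only [charSum, Finset.sum_mul, ← AddChar.map_add_eq_mul]
  rw [Finset.sum_comm]
  simp only [AddChar.sum_apply_eq_ite, add_neg_eq_zero]
  rw [Finset.sum_ite_eq' D g (fun _ => (Fintype.card G : ℂ))]
  simp only [ind]
  split_ifs <;> simp

lemma nsum_formula (D : Finset G) (p q : ℂ)
    (hpq : ∀ ψ : AddChar G ℂ, ψ ≠ 1 → (charSum ψ D) ^ 2 = p * charSum ψ D + q) (d : G) :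
    (Fintype.card G : ℂ) * (((D ×ˢ D).filter fun z => z.1 + z.2 = d).card : ℂ)
      = ((D.card : ℂ) ^ 2 - p * D.card - q)
        + p * ((Fintype.card G : ℂ) * ind D d)
        + q * (if d = 0 then (Fintype.card G : ℂ) else 0) := by
  classical
  have expand : ∀ ψ : AddChar G ℂ, (charSum ψ D) ^ 2 * ψ (-d)
      = ∑ z ∈ D ×ˢ D, ψ (z.1 + z.2 + -d) := by
    intro ψ
    calc (charSum ψ D) ^ 2 * ψ (-d)
        = ∑ i ∈ D, ∑ j ∈ D, ψ i * ψ j * ψ (-d) := by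
          rw [sq, charSum, Finset.sum_mul_sum]
          simp_rw [Finset.sum_mul]
      _ = ∑ i ∈ D, ∑ j ∈ D, ψ (i + j + -d) := by
          simp_rw [← AddChar.map_add_eq_mul]
      _ = ∑ z ∈ D ×ˢ D, ψ (z.1 + z.2 + -d) := (Finset.sum_product D D (fun z => ψ (z.1 + z.2 + -d))).symm
  have e1 : ∑ ψ : AddChar G ℂ, (charSum ψ D) ^ 2 * ψ (-d)
      = (Fintype.card G : ℂ) * (((D ×ˢ D).filter fun z => z.1 + z.2 = d).card : ℂ) := by
    simp_rw [expand]
    rw [Finset.sum_comm]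
    simp only [AddChar.sum_apply_eq_ite, add_neg_eq_zero]
    rw [← Finset.sum_filter, Finset.sum_const, nsmul_eq_mul, mul_comm]
  have split : ∀ ψ : AddChar G ℂ, (charSum ψ D) ^ 2 * ψ (-d)
      = (p * (charSum ψ D * ψ (-d)) + q * ψ (-d))
        + ((charSum ψ D) ^ 2 - p * charSum ψ D - q) * ψ (-d) := by
    intro ψ; ring
  have e2 : ∑ ψ : AddChar G ℂ, (charSum ψ D) ^ 2 * ψ (-d)
      = (p * ((Fintype.card G : ℂ) * ind D d)
          + q * (if d = 0 then (Fintype.card G : ℂ) else 0))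
        + ((D.card : ℂ) ^ 2 - p * D.card - q) := by
    simp_rw [split]
    rw [Finset.sum_add_distrib, Finset.sum_add_distrib]
    have t1 : ∑ ψ : AddChar G ℂ, p * (charSum ψ D * ψ (-d))
        = p * ((Fintype.card G : ℂ) * ind D d) := by
      rw [← Finset.mul_sum, sum_charSum_mul_char]
    have t2 : ∑ ψ : AddChar G ℂ, q * ψ (-d)
        = q * (if d = 0 then (Fintype.card G : ℂ) else 0) := by
      rw [← Finset.mul_sum, AddChar.sum_apply_eq_ite, neg_eq_zero]
    have t3 : ∑ ψ : AddChar G ℂ, ((charSum ψ D) ^ 2 - p * charSum ψ D - q) * ψ (-d)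
        = ((D.card : ℂ) ^ 2 - p * D.card - q) := by
      rw [Finset.sum_eq_single (1 : AddChar G ℂ)]
      · rw [charSum_one_eq, AddChar.one_apply, mul_one]
      · intro ψ _ hψ
        rw [hpq ψ hψ]; ring
      · intro h; exact absurd (Finset.mem_univ _) h
    rw [t1, t2, t3]
  rw [← e1, e2]; ring

end AuxProof

theorem stmt_9 {G : Type*} [AddCommGroup G] [Fintype G] (m u : ℕ) [NeZero m]
    (hu : Fintype.card G = u ^ 2)
    (T B : ZMod m → ZMod m → Finset G)
    (h1 : Cond1 m u T B) (h2 : Cond2 m T B) (h3 : Cond3 m u T B) (h4 : Cond4 m T B) :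
    ∀ x : ZMod m, ∀ S : Finset G, IsSFor m T B x S →
      (∀ ψ : AddChar G ℂ, ψ ≠ 1 →
        charSum ψ S = ((u : ℂ) - 1) / m ∨
        charSum ψ S = (-((m : ℂ) - 1) * u - 1) / m) ∧
      (∀ g ∈ S, -g ∈ S) ∧
      (∃ k l μ : ℕ,
        (SimpleGraph.fromRel fun a b : G => a - b ∈ S).IsSRGWith
          (Fintype.card G) k l μ) := by
  intro x S hS
  obtain ⟨h0S, hind⟩ := hS
  have hm : (m : ℂ) ≠ 0 := Nat.cast_ne_zero.2 (NeZero.ne m)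
  -- Part 1: the two character values
  have part1 : ∀ ψ : AddChar G ℂ, ψ ≠ 1 →
      charSum ψ S = ((u : ℂ) - 1) / m ∨
      charSum ψ S = (-((m : ℂ) - 1) * u - 1) / m := by
    intro ψ hψ
    have hψ0 : ψ ≠ 0 := by rwa [← AddChar.one_eq_zero]
    have hmain : ∑ y : ZMod m, (charSum ψ (T x y) + charSum ψ (B x y))
        = m * charSum ψ S + 1 := by
      have key : ∑ g : G, (((∑ y : ZMod m, (ind (T x y) g + ind (B x y) g)) : ℤ) : ℂ) * ψ g
          = ∑ g : G, ((((m : ℤ) * ind S g + 1 + (if g = 0 then 1 else 0)) : ℤ) : ℂ) * ψ g := by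
        refine Finset.sum_congr rfl fun g _ => ?_
        rw [hind g]
      have lhs_eq : ∑ g : G, (((∑ y : ZMod m, (ind (T x y) g + ind (B x y) g)) : ℤ) : ℂ) * ψ g
          = ∑ y : ZMod m, (charSum ψ (T x y) + charSum ψ (B x y)) := by
        push_cast
        simp_rw [Finset.sum_mul, add_mul]
        rw [Finset.sum_comm]
        refine Finset.sum_congr rfl fun y _ => ?_
        rw [Finset.sum_add_distrib, sum_ind_mul_char, sum_ind_mul_char]
      have rhs_eq : ∑ g : G, ((((m : ℤ) * ind S g + 1 + (if g = 0 then 1 else 0)) : ℤ) : ℂ) * ψ g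
          = m * charSum ψ S + 1 := by
        have step : ∀ g : G, ((((m : ℤ) * ind S g + 1 + (if g = 0 then 1 else 0)) : ℤ) : ℂ) * ψ g
            = (m : ℂ) * ((ind S g : ℂ) * ψ g) + ψ g + (if g = 0 then ψ g else 0) := by
          intro g
          push_cast
          split_ifs <;> ring
        simp_rw [step]
        rw [Finset.sum_add_distrib, Finset.sum_add_distrib, ← Finset.mul_sum,
          sum_ind_mul_char, AddChar.sum_eq_zero_iff_ne_zero.2 hψ0,
          Fintype.sum_ite_eq' (0 : G) (fun g => ψ g)]
        simp
      rw [← lhs_eq, key, rhs_eq]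
    obtain ⟨⟨x', y', b⟩, ⟨hA, hB', hC, hD⟩, -⟩ := h3 ψ hψ
    dsimp only at hA hB' hC hD
    have hsum : ∑ y : ZMod m, charSum ψ ((cond b T B) x y) = m * charSum ψ S + 1 := by
      rw [← hmain]
      refine Finset.sum_congr rfl fun y _ => ?_
      cases b
      · have := hD x y
        simp only [Bool.not_false] at this
        simp only [cond] at this ⊢
        rw [this, zero_add]
      · have := hD x y
        simp only [Bool.not_true] at this
        simp only [cond] at this ⊢
        rw [this, add_zero]
    by_cases hx : x = x'
    · right
      have val : ∑ y : ZMod m, charSum ψ ((cond b T B) x y) = -(((m : ℂ) - 1) * u) := by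
        rw [← Finset.add_sum_erase Finset.univ _ (Finset.mem_univ y')]
        rw [hC x y' (iff_of_true hx rfl), zero_add]
        rw [Finset.sum_congr rfl fun y hy => by
          rw [hx, hA y (Finset.ne_of_mem_erase hy)]]
        rw [Finset.sum_const, Finset.card_erase_of_mem (Finset.mem_univ y'),
          Finset.card_univ, ZMod.card, nsmul_eq_mul]
        have h1m : (1 : ℕ) ≤ m := Nat.one_le_iff_ne_zero.2 (NeZero.ne m)
        push_cast [h1m]
        ring
      have heq := hsum.symm.trans val
      rw [eq_div_iff hm]
      linear_combination heq
    · left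
      have val : ∑ y : ZMod m, charSum ψ ((cond b T B) x y) = (u : ℂ) := by
        rw [← Finset.add_sum_erase Finset.univ _ (Finset.mem_univ y')]
        rw [hB' x hx]
        rw [Finset.sum_congr rfl fun y hy =>
          hC x y (iff_of_false hx (Finset.ne_of_mem_erase hy))]
        simp
      have heq := hsum.symm.trans val
      rw [eq_div_iff hm]
      linear_combination heq
  -- character sums are real
  have hreal : ∀ ψ : AddChar G ℂ, (starRingEnd ℂ) (charSum ψ S) = charSum ψ S := by
    intro ψ
    by_cases hψ : ψ = 1
    · subst hψ; rw [charSum_one_eq]; simp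
    · rcases part1 ψ hψ with h | h <;> rw [h] <;>
        simp [map_div₀, map_sub, map_mul, map_neg, map_one]
  -- Part 2: symmetry
  have hsym : ∀ g ∈ S, -g ∈ S := by
    intro g hg
    have e1 : ∑ ψ : AddChar G ℂ, charSum ψ S * ψ g
        = (Fintype.card G : ℂ) * ind S g := by
      have := congrArg (starRingEnd ℂ) (sum_charSum_mul_char S g)
      rw [map_sum] at this
      simp only [map_mul, hreal, ← AddChar.map_neg_eq_conj, neg_neg] at this
      rw [this]
      simp [ind, apply_ite (fun z : ℤ => (z : ℂ)), apply_ite (starRingEnd ℂ)]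
    have e2 := sum_charSum_mul_char S (-g)
    rw [neg_neg] at e2
    have e3 : (Fintype.card G : ℂ) * (ind S (-g) : ℂ)
        = (Fintype.card G : ℂ) * ind S g := by rw [← e1, ← e2]
    have hG0 : (Fintype.card G : ℂ) ≠ 0 := Nat.cast_ne_zero.2 Fintype.card_ne_zero
    have e4 : (ind S (-g) : ℂ) = ind S g := mul_left_cancel₀ hG0 e3
    simp only [ind] at e4
    by_contra hng
    rw [if_pos hg, if_neg hng] at e4
    norm_num at e4
  -- Part 3: strongly regular graph
  set α : ℂ := ((u : ℂ) - 1) / m with hα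
  set β : ℂ := (-((m : ℂ) - 1) * u - 1) / m with hβ
  have hpq : ∀ ψ : AddChar G ℂ, ψ ≠ 1 →
      (charSum ψ S) ^ 2 = (α + β) * charSum ψ S + (-(α * β)) := by
    intro ψ hψ
    rcases part1 ψ hψ with h | h <;> rw [h] <;> ring
  have hformula := fun d : G => nsum_formula S (α + β) (-(α * β)) hpq d
  have hG0 : (Fintype.card G : ℂ) ≠ 0 := Nat.cast_ne_zero.2 Fintype.card_ne_zero
  have hconst : ∀ d₁ d₂ : G, d₁ ≠ 0 → d₂ ≠ 0 → (d₁ ∈ S ↔ d₂ ∈ S) →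
      ((S ×ˢ S).filter fun z => z.1 + z.2 = d₁).card
        = ((S ×ˢ S).filter fun z => z.1 + z.2 = d₂).card := by
    intro d₁ d₂ h1 h2 hiff
    have e1 := hformula d₁
    have e2 := hformula d₂
    rw [if_neg h1] at e1
    rw [if_neg h2] at e2
    have hi : (ind S d₁ : ℂ) = ind S d₂ := by
      simp only [ind]; rw [if_congr hiff rfl rfl]
    rw [hi] at e1
    have := mul_left_cancel₀ hG0 (e1.trans e2.symm)
    exact_mod_cast this
  have hadj : ∀ a c : G, (SimpleGraph.fromRel fun a b : G => a - b ∈ S).Adj a c ↔ a - c ∈ S := by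
    intro a c
    simp only [SimpleGraph.fromRel_adj]
    constructor
    · rintro ⟨hne, h | h⟩
      · exact h
      · have := hsym _ h; rwa [neg_sub] at this
    · intro h
      refine ⟨fun e => h0S ?_, Or.inl h⟩
      rw [e, sub_self] at h; exact h
  have hcn : ∀ a c : G,
      Fintype.card ((SimpleGraph.fromRel fun a b : G => a - b ∈ S).commonNeighbors a c)
        = ((S ×ˢ S).filter fun z => z.1 + z.2 = a - c).card := by
    intro a c
    rw [← Set.toFinset_card]
    apply Finset.card_bij (fun w _ => (a - w, w - c))
    · intro w hw
      rw [Set.mem_toFinset, SimpleGraph.mem_commonNeighbors] at hw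
      obtain ⟨h1, h2⟩ := hw
      rw [hadj] at h1 h2
      have h2' : w - c ∈ S := by have := hsym _ h2; rwa [neg_sub] at this
      simp only [Finset.mem_filter, Finset.mem_product]
      exact ⟨⟨h1, h2'⟩, by abel⟩
    · intro w₁ _ w₂ _ h
      have := congrArg Prod.fst h
      simp only at this
      exact sub_right_injective this
    · intro z hz
      simp only [Finset.mem_filter, Finset.mem_product] at hz
      obtain ⟨⟨hz1, hz2⟩, hz3⟩ := hz
      refine ⟨a - z.1, ?_, ?_⟩
      · rw [Set.mem_toFinset, SimpleGraph.mem_commonNeighbors, hadj, hadj]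
        constructor
        · rwa [sub_sub_cancel]
        · have hcz : c - (a - z.1) = -z.2 := by
            calc c - (a - z.1) = -(a - c) + z.1 := by abel
              _ = -(z.1 + z.2) + z.1 := by rw [hz3]
              _ = -z.2 := by abel
          rw [hcz]
          exact hsym _ hz2
      · have ha1 : a - (a - z.1) = z.1 := by abel
        have ha2 : a - z.1 - c = z.2 := by
          calc a - z.1 - c = (a - c) - z.1 := by abel
            _ = (z.1 + z.2) - z.1 := by rw [← hz3]
            _ = z.2 := by abel
        rw [ha1, ha2]
  have hdeg : ∀ a : G, (SimpleGraph.fromRel fun a b : G => a - b ∈ S).degree a = S.card := by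
    intro a
    rw [SimpleGraph.degree, SimpleGraph.neighborFinset_eq_filter]
    apply Finset.card_bij (fun c _ => a - c)
    · intro c hc
      rw [Finset.mem_filter] at hc
      exact (hadj a c).1 hc.2
    · intro c₁ _ c₂ _ h
      exact sub_right_injective h
    · intro s hs
      refine ⟨a - s, ?_, by abel⟩
      rw [Finset.mem_filter]
      refine ⟨Finset.mem_univ _, (hadj _ _).2 ?_⟩
      rwa [sub_sub_cancel]
  have hl : ∃ l : ℕ, ∀ d ∈ S, ((S ×ˢ S).filter fun z => z.1 + z.2 = d).card = l := by
    by_cases hne : S.Nonempty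
    · obtain ⟨d₀, hd₀⟩ := hne
      exact ⟨_, fun d hd => hconst d d₀ (ne_of_mem_of_not_mem hd h0S)
        (ne_of_mem_of_not_mem hd₀ h0S) (iff_of_true hd hd₀)⟩
    · exact ⟨0, fun d hd => absurd ⟨d, hd⟩ hne⟩
  have hmu : ∃ μ' : ℕ, ∀ d : G, d ≠ 0 → d ∉ S →
      ((S ×ˢ S).filter fun z => z.1 + z.2 = d).card = μ' := by
    by_cases hne : ∃ d : G, d ≠ 0 ∧ d ∉ S
    · obtain ⟨d₀, h1, h2⟩ := hne
      exact ⟨_, fun d hd hdS => hconst d d₀ hd h1 (iff_of_false hdS h2)⟩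
    · push_neg at hne
      exact ⟨0, fun d h1 h2 => absurd (hne d h1) h2⟩
  obtain ⟨l, hl⟩ := hl
  obtain ⟨μ', hmu⟩ := hmu
  refine ⟨part1, hsym, S.card, l, μ', ?_, ?_, ?_, ?_⟩
  · rfl
  · intro v; exact hdeg v
  · intro v w h
    rw [hcn]
    exact hl _ ((hadj v w).1 h)
  · intro v w hvw hnadj
    rw [hcn]
    exact hmu _ (sub_ne_zero.2 hvw) (fun hmem => hnadj ((hadj v w).2 hmem))
end
end

section
/- Let G be a finite abelian group of order u² containing 2m² building blocks satisfying conditions (1), (2), (3), (5). Then for each fixed y₂ ∈ Z_m, the sets T_{y₁, y₁+y₂}, y₁ ∈ Z_m, are pairwise disjoint subsets of G ∖ {0_G}. -/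
open scoped Classical

noncomputable section

lemma sumT_aux {G : Type*} [AddCommGroup G] [Fintype G] (m : ℕ) [NeZero m]
    (T B : ZMod m → ZMod m → Finset G) (h2 : Cond2 m T B) (g : G) :
    (∑ x : ZMod m, ∑ y : ZMod m, ind (T x y) g) = m ∧
    (∑ x : ZMod m, ∑ y : ZMod m, ind (B x y) g) = m := by
  have key : ∀ (S : ZMod m → ZMod m → Finset G),
      (∀ x y : ZMod m, ∀ g : G, ∃! z : ZMod m, g ∈ S (x - z) (y + z)) →
      (∑ x : ZMod m, ∑ y : ZMod m, ind (S x y) g) = m := by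
    intro S hS
    have diag : ∀ c : ZMod m, ∑ y : ZMod m, ind (S (c - y) y) g = 1 := by
      intro c
      obtain ⟨z, hz, huniq⟩ := hS c 0 g
      simp only [zero_add] at hz huniq
      have : (∑ y : ZMod m, ind (S (c - y) y) g)
          = ∑ y : ZMod m, (if y = z then (1:ℤ) else 0) := by
        apply Finset.sum_congr rfl
        intro y _
        by_cases h : y = z
        · subst h; simp [ind, hz]
        · have : g ∉ S (c - y) y := fun hmem => h (huniq y hmem)
          simp [ind, this, h]
      rw [this]
      simp
    calc (∑ x : ZMod m, ∑ y : ZMod m, ind (S x y) g)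
        = ∑ y : ZMod m, ∑ x : ZMod m, ind (S x y) g := Finset.sum_comm
      _ = ∑ y : ZMod m, ∑ c : ZMod m, ind (S (c - y) y) g := by
          apply Finset.sum_congr rfl
          intro y _
          exact (Fintype.sum_equiv (Equiv.subRight y)
            (fun c => ind (S (c - y) y) g) (fun x => ind (S x y) g)
            (fun c => rfl)).symm
      _ = ∑ c : ZMod m, ∑ y : ZMod m, ind (S (c - y) y) g := Finset.sum_comm
      _ = ∑ _c : ZMod m, (1:ℤ) := Finset.sum_congr rfl (fun c _ => diag c)
      _ = m := by simp [ZMod.card]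
  exact ⟨key T (fun x y g => (h2 x y g).1), key B (fun x y g => (h2 x y g).2)⟩

theorem stmt_12 {G : Type*} [AddCommGroup G] [Fintype G] (m u : ℕ) [NeZero m]
    (hu : Fintype.card G = u ^ 2)
    (T B : ZMod m → ZMod m → Finset G)
    (h1 : Cond1 m u T B) (h2 : Cond2 m T B) (h3 : Cond3 m u T B) (h5 : Cond5 m T B) :
    ∀ y₂ : ZMod m, ∀ y₁ y₁' : ZMod m, y₁ ≠ y₁' →
      ∀ Tset Tset' : Finset G,
        IsTFor m T B y₁ (y₁ + y₂) Tset → IsTFor m T B y₁' (y₁' + y₂) Tset' →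
        Disjoint Tset Tset' := by
  intro y₂ y₁ y₁' hne Tset Tset' hT hT'
  rw [Finset.disjoint_left]
  intro g hg hg'
  have hg0 : g ≠ 0 := fun h => hT.1 (h ▸ hg)
  set F : ZMod m → Finset G := fun y =>
    if y = y₁ then Tset else if y = y₁' then Tset'
    else Classical.choose (h5 y (y + y₂)) with hFdef
  have hF : ∀ y : ZMod m, IsTFor m T B y (y + y₂) (F y) := by
    intro y
    simp only [hFdef]
    split_ifs with h h'
    · subst h; exact hT
    · subst h'; exact hT'
    · exact Classical.choose_spec (h5 y (y + y₂))
  have hsum : (∑ y : ZMod m, ∑ x : ZMod m, (ind (T x y) g + ind (B x (y + y₂)) g))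
      = 2 * m := by
    have h1' := (sumT_aux m T B h2 g).1
    have h2' := (sumT_aux m T B h2 g).2
    have eB : (∑ y : ZMod m, ∑ x : ZMod m, ind (B x (y + y₂)) g)
        = ∑ y : ZMod m, ∑ x : ZMod m, ind (B x y) g := by
      exact Fintype.sum_equiv (Equiv.addRight y₂)
        (fun y => ∑ x : ZMod m, ind (B x (y + y₂)) g)
        (fun y => ∑ x : ZMod m, ind (B x y) g) (fun y => rfl)
    calc (∑ y : ZMod m, ∑ x : ZMod m, (ind (T x y) g + ind (B x (y + y₂)) g))
        = (∑ y : ZMod m, ∑ x : ZMod m, ind (T x y) g)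
          + ∑ y : ZMod m, ∑ x : ZMod m, ind (B x (y + y₂)) g := by
          rw [← Finset.sum_add_distrib]
          exact Finset.sum_congr rfl (fun y _ => Finset.sum_add_distrib)
      _ = (m : ℤ) + m := by
          rw [eB, Finset.sum_comm, h1']
          rw [show (∑ y : ZMod m, ∑ x : ZMod m, ind (B x y) g)
            = ∑ x : ZMod m, ∑ y : ZMod m, ind (B x y) g from Finset.sum_comm, h2']
      _ = 2 * m := by ring
  have hsum2 : (∑ y : ZMod m, ∑ x : ZMod m, (ind (T x y) g + ind (B x (y + y₂)) g))
      = m * (∑ y : ZMod m, ind (F y) g) + m := by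
    calc (∑ y : ZMod m, ∑ x : ZMod m, (ind (T x y) g + ind (B x (y + y₂)) g))
        = ∑ y : ZMod m, ((m : ℤ) * ind (F y) g + 1) := by
          apply Finset.sum_congr rfl
          intro y _
          have := (hF y).2 g
          rw [this, if_neg hg0]
          ring
      _ = m * (∑ y : ZMod m, ind (F y) g) + m := by
          rw [Finset.sum_add_distrib, ← Finset.mul_sum]
          simp [ZMod.card]
  have hone : (∑ y : ZMod m, ind (F y) g) = 1 := by
    have hm : (m : ℤ) ≠ 0 := by exact_mod_cast NeZero.ne m
    have : (m : ℤ) * (∑ y : ZMod m, ind (F y) g) = m * 1 := by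
      rw [hsum2] at hsum; linarith
    exact mul_left_cancel₀ hm this
  have hge : (2 : ℤ) ≤ ∑ y : ZMod m, ind (F y) g := by
    have hsub : ({y₁, y₁'} : Finset (ZMod m)) ⊆ Finset.univ := Finset.subset_univ _
    have hpos : ∀ y ∈ Finset.univ \ ({y₁, y₁'} : Finset (ZMod m)), (0:ℤ) ≤ ind (F y) g := by
      intro y _
      unfold ind; split_ifs <;> norm_num
    have := Finset.sum_le_sum_of_subset_of_nonneg hsub (fun i hi hni => hpos i (Finset.mem_sdiff.mpr ⟨hi, hni⟩))
    have hpair : (∑ y ∈ ({y₁, y₁'} : Finset (ZMod m)), ind (F y) g) = 2 := by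
      rw [Finset.sum_pair hne]
      have e1 : F y₁ = Tset := by simp [hFdef]
      have e2 : F y₁' = Tset' := by simp [hFdef, hne.symm]
      rw [e1, e2]
      simp [ind, hg, hg']
    omega
  omega
end
end

section
/- Under the product construction, the blocks ⊤(x,y) and ⊥(x,y) in G₁ × G₂ satisfy the cardinality condition: |⊤(x,y)| = |⊥(x,y)| = (u²v²−uv)/m if y ≠ 0, and |⊤(x,0)| = |⊥(x,0)| = (u²v²−uv)/m + uv. -/
open scoped Classical

noncomputable section

/-- The product building block `⊤(x,y)` in `G₁ × G₂`. -/
def prodTop {G₁ G₂ : Type*} (m : ℕ) [NeZero m]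
    (T₁ B₁ : ZMod m → ZMod m → Finset G₁) (T₂ B₂ : ZMod m → ZMod m → Finset G₂)
    (x y : ZMod m) : Finset (G₁ × G₂) :=
  Finset.univ.biUnion fun a : ZMod m => Finset.univ.biUnion fun b : ZMod m =>
    (T₁ (x - a) (y - b)) ×ˢ ((B₂ (x + y - a) a) ∩ (T₂ (x + y - b) b))

/-- The product building block `⊥(x,y)` in `G₁ × G₂`. -/
def prodBot {G₁ G₂ : Type*} (m : ℕ) [NeZero m]
    (T₁ B₁ : ZMod m → ZMod m → Finset G₁) (T₂ B₂ : ZMod m → ZMod m → Finset G₂)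
    (x y : ZMod m) : Finset (G₁ × G₂) :=
  Finset.univ.biUnion fun a : ZMod m => Finset.univ.biUnion fun b : ZMod m =>
    (B₁ (x - b) (y - a)) ×ˢ ((B₂ (x + y - a) a) ∩ (T₂ (x + y - b) b))


/-!
Write `P a = B₂(x+y-a, a)` and `Q b = T₂(x+y-b, b)`; by condition (2) for `G₂` both
families partition `G₂`, so `⊤(x,y)` is the disjoint union of the boxes
`T₁(x-a, y-b) × (P a ∩ Q b)`. By condition (1) the first factor has size `K + [b = y] u`
with `K = (u² - u)/m`, and summing over `a` first collapses `P a ∩ Q b` to `Q b`, so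
`|⊤(x,y)| = K v² + u |T₂(x,y)|`; condition (1) for `T₂(x,y)` gives the claim. For `⊥(x,y)`
the roles of `a` and `b` are exchanged.
-/

open Finset

section Partition

variable {ι G : Type*} {S : ι → Finset G}

theorem pairwiseDisjoint_of_existsUnique_mem (hS : ∀ g, ∃! i, g ∈ S i) (s : Set ι) :
    s.PairwiseDisjoint S := by
  intro i _ j _ hij
  rw [Function.onFun, disjoint_left]
  exact fun g hi hj => hij ((hS g).unique hi hj)

variable [Fintype ι]

theorem sum_card_inter_of_existsUnique_mem (hS : ∀ g, ∃! i, g ∈ S i) (D : Finset G) :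
    ∑ i, #(S i ∩ D) = #D := by
  rw [← card_biUnion ((pairwiseDisjoint_of_existsUnique_mem hS _).mono_on
    fun i _ => inter_subset_left)]
  congr 1
  ext g
  simp only [mem_biUnion, mem_univ, true_and, mem_inter]
  exact ⟨fun ⟨_, _, hg⟩ => hg, fun hg => ⟨_, (hS g).exists.choose_spec, hg⟩⟩

theorem sum_mul_card_of_existsUnique_mem [DecidableEq ι] [Fintype G] {R : Type*} [CommSemiring R]
    (hS : ∀ g, ∃! i, g ∈ S i) (K w : R) (j : ι) :
    ∑ i, (K + if j = i then w else 0) * #(S i) = K * Fintype.card G + w * #(S j) := by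
  have hcover := sum_card_inter_of_existsUnique_mem hS univ
  simp only [inter_univ] at hcover
  simp only [add_mul, sum_add_distrib, ← mul_sum, ite_mul, zero_mul, sum_ite_eq, mem_univ,
    if_true]
  rw [← Nat.cast_sum, hcover, card_univ]

variable {P Q : ι → Finset G}

theorem sum_sum_mul_card_inter_right {R : Type*} [CommSemiring R]
    (hP : ∀ g, ∃! i, g ∈ P i) (c : ι → R) :
    ∑ a, ∑ b, c b * #(P a ∩ Q b) = ∑ b, c b * #(Q b) := by
  rw [sum_comm]
  refine sum_congr rfl fun b _ => ?_
  rw [← mul_sum, ← Nat.cast_sum, sum_card_inter_of_existsUnique_mem hP]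

theorem sum_sum_mul_card_inter_left {R : Type*} [CommSemiring R]
    (hQ : ∀ g, ∃! i, g ∈ Q i) (c : ι → R) :
    ∑ a, ∑ b, c a * #(P a ∩ Q b) = ∑ a, c a * #(P a) := by
  refine sum_congr rfl fun a _ => ?_
  simp only [inter_comm (P a)]
  rw [← mul_sum, ← Nat.cast_sum, sum_card_inter_of_existsUnique_mem hQ]

theorem card_biUnion_product_inter {H : Type*} (f : ι → ι → Finset H)
    (hP : ∀ g, ∃! i, g ∈ P i) (hQ : ∀ g, ∃! i, g ∈ Q i) :
    #(univ.biUnion fun a => univ.biUnion fun b => f a b ×ˢ (P a ∩ Q b))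
      = ∑ a, ∑ b, #(f a b) * #(P a ∩ Q b) := by
  rw [card_biUnion]
  · refine sum_congr rfl fun a _ => ?_
    rw [card_biUnion]
    · exact sum_congr rfl fun b _ => card_product _ _
    · intro b _ b' _ hbb'
      simp only [Function.onFun, disjoint_left, mem_product, mem_inter]
      exact fun p hp hp' => hbb' ((hQ p.2).unique hp.2.2 hp'.2.2)
  · intro a _ a' _ haa'
    simp only [Function.onFun, disjoint_left, mem_biUnion, mem_univ, true_and, mem_product,
      mem_inter]
    rintro p ⟨_, hp⟩ ⟨_, hp'⟩
    exact haa' ((hP p.2).unique hp.2.1 hp'.2.1)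

end Partition

section Blocks

variable {G : Type*} {m : ℕ} {T B : ZMod m → ZMod m → Finset G}

theorem Cond1.card_top_eq {u : ℕ} (h : Cond1 m u T B) (x y : ZMod m) :
    (#(T x y) : ℚ) = ((u : ℚ) ^ 2 - u) / m + if y = 0 then (u : ℚ) else 0 := by
  by_cases hy : y = 0
  · simp only [hy, ((h x 0).2 rfl).1, if_true]
  · simp only [hy, ((h x y).1 hy).1, if_false, add_zero]

theorem Cond1.card_bot_eq {u : ℕ} (h : Cond1 m u T B) (x y : ZMod m) :
    (#(B x y) : ℚ) = ((u : ℚ) ^ 2 - u) / m + if y = 0 then (u : ℚ) else 0 := by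
  by_cases hy : y = 0
  · simp only [hy, ((h x 0).2 rfl).2, if_true]
  · simp only [hy, ((h x y).1 hy).2, if_false, add_zero]

theorem Cond2.existsUnique_mem_antidiagonal (h : Cond2 m T B) (s : ZMod m) :
    (∀ g, ∃! z, g ∈ T (s - z) z) ∧ ∀ g, ∃! z, g ∈ B (s - z) z := by
  simpa only [zero_add, forall_and] using h s 0

end Blocks

section Product

variable {G₁ G₂ : Type*} [Fintype G₂] {m u v : ℕ} [NeZero m]
  {T₁ B₁ : ZMod m → ZMod m → Finset G₁} {T₂ B₂ : ZMod m → ZMod m → Finset G₂}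

theorem card_prodTop (hv : Fintype.card G₂ = v ^ 2) (h₁ : Cond1 m u T₁ B₁)
    (h₂ : Cond1 m v T₂ B₂) (h₂' : Cond2 m T₂ B₂) (x y : ZMod m) :
    (#(prodTop m T₁ B₁ T₂ B₂ x y) : ℚ)
      = ((u : ℚ) ^ 2 * v ^ 2 - u * v) / m + if y = 0 then (u * v : ℚ) else 0 := by
  obtain ⟨hT, hB⟩ := h₂'.existsUnique_mem_antidiagonal (x + y)
  rw [prodTop, card_biUnion_product_inter _ hB hT]
  push_cast
  simp only [h₁.card_top_eq, sub_eq_zero]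
  rw [sum_sum_mul_card_inter_right hB, sum_mul_card_of_existsUnique_mem hT, hv,
    add_sub_cancel_right, h₂.card_top_eq]
  have hm : (m : ℚ) ≠ 0 := Nat.cast_ne_zero.2 (NeZero.ne m)
  split_ifs <;> field_simp <;> push_cast <;> ring

theorem card_prodBot (hv : Fintype.card G₂ = v ^ 2) (h₁ : Cond1 m u T₁ B₁)
    (h₂ : Cond1 m v T₂ B₂) (h₂' : Cond2 m T₂ B₂) (x y : ZMod m) :
    (#(prodBot m T₁ B₁ T₂ B₂ x y) : ℚ)
      = ((u : ℚ) ^ 2 * v ^ 2 - u * v) / m + if y = 0 then (u * v : ℚ) else 0 := by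
  obtain ⟨hT, hB⟩ := h₂'.existsUnique_mem_antidiagonal (x + y)
  rw [prodBot, card_biUnion_product_inter _ hB hT]
  push_cast
  simp only [h₁.card_bot_eq, sub_eq_zero]
  rw [sum_sum_mul_card_inter_left hT, sum_mul_card_of_existsUnique_mem hB, hv,
    add_sub_cancel_right, h₂.card_bot_eq]
  have hm : (m : ℚ) ≠ 0 := Nat.cast_ne_zero.2 (NeZero.ne m)
  split_ifs <;> field_simp <;> push_cast <;> ring

end Product

theorem stmt_13_general {G₁ G₂ : Type*} [Fintype G₂]
    (m u v : ℕ) [NeZero m]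
    (hv : Fintype.card G₂ = v ^ 2)
    (T₁ B₁ : ZMod m → ZMod m → Finset G₁) (T₂ B₂ : ZMod m → ZMod m → Finset G₂)
    (h11 : Cond1 m u T₁ B₁)
    (h12 : Cond1 m v T₂ B₂) (h22 : Cond2 m T₂ B₂) :
    ∀ x y : ZMod m,
      (y ≠ 0 →
        ((prodTop m T₁ B₁ T₂ B₂ x y).card : ℚ) = ((u : ℚ) ^ 2 * v ^ 2 - u * v) / m ∧
        ((prodBot m T₁ B₁ T₂ B₂ x y).card : ℚ) = ((u : ℚ) ^ 2 * v ^ 2 - u * v) / m) ∧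
      (y = 0 →
        ((prodTop m T₁ B₁ T₂ B₂ x y).card : ℚ) = ((u : ℚ) ^ 2 * v ^ 2 - u * v) / m + u * v ∧
        ((prodBot m T₁ B₁ T₂ B₂ x y).card : ℚ) = ((u : ℚ) ^ 2 * v ^ 2 - u * v) / m + u * v) := by
  intro x y
  rw [card_prodTop hv h11 h12 h22, card_prodBot hv h11 h12 h22]
  exact ⟨fun hy => by simp only [hy, if_false, add_zero, and_self],
    fun hy => by simp only [hy, if_true, and_self]⟩

theorem stmt_13 {G₁ G₂ : Type*} [AddCommGroup G₁] [Fintype G₁] [AddCommGroup G₂] [Fintype G₂]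
    (m u v : ℕ) [NeZero m]
    (hu : Fintype.card G₁ = u ^ 2) (hv : Fintype.card G₂ = v ^ 2)
    (T₁ B₁ : ZMod m → ZMod m → Finset G₁) (T₂ B₂ : ZMod m → ZMod m → Finset G₂)
    (h11 : Cond1 m u T₁ B₁) (h21 : Cond2 m T₁ B₁) (h31 : Cond3 m u T₁ B₁)
    (h12 : Cond1 m v T₂ B₂) (h22 : Cond2 m T₂ B₂) (h32 : Cond3 m v T₂ B₂) :
    ∀ x y : ZMod m,
      (y ≠ 0 →
        ((prodTop m T₁ B₁ T₂ B₂ x y).card : ℚ) = ((u : ℚ) ^ 2 * v ^ 2 - u * v) / m ∧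
        ((prodBot m T₁ B₁ T₂ B₂ x y).card : ℚ) = ((u : ℚ) ^ 2 * v ^ 2 - u * v) / m) ∧
      (y = 0 →
        ((prodTop m T₁ B₁ T₂ B₂ x y).card : ℚ) = ((u : ℚ) ^ 2 * v ^ 2 - u * v) / m + u * v ∧
        ((prodBot m T₁ B₁ T₂ B₂ x y).card : ℚ) = ((u : ℚ) ^ 2 * v ^ 2 - u * v) / m + u * v) :=
  stmt_13_general m u v hv T₁ B₁ T₂ B₂ h11 h12 h22
end
end

section
/- Under the product construction, for every x,y ∈ Z_m, the translated product blocks ⊤(x−s, y+s), s ∈ Z_m, partition G₁ × G₂, and similarly the sets ⊥(x−s, y+s), s ∈ Z_m, partition G₁ × G₂. -/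
open scoped Classical

noncomputable section

theorem stmt_14 {G₁ G₂ : Type*} [AddCommGroup G₁] [Fintype G₁] [AddCommGroup G₂] [Fintype G₂]
    (m u v : ℕ) [NeZero m]
    (hu : Fintype.card G₁ = u ^ 2) (hv : Fintype.card G₂ = v ^ 2)
    (T₁ B₁ : ZMod m → ZMod m → Finset G₁) (T₂ B₂ : ZMod m → ZMod m → Finset G₂)
    (h11 : Cond1 m u T₁ B₁) (h21 : Cond2 m T₁ B₁) (h31 : Cond3 m u T₁ B₁)
    (h12 : Cond1 m v T₂ B₂) (h22 : Cond2 m T₂ B₂) (h32 : Cond3 m v T₂ B₂) :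
    ∀ x y : ZMod m, ∀ g : G₁ × G₂,
      (∃! s : ZMod m, g ∈ prodTop m T₁ B₁ T₂ B₂ (x - s) (y + s)) ∧
      (∃! s : ZMod m, g ∈ prodBot m T₁ B₁ T₂ B₂ (x - s) (y + s)) := by

  intro x y g
  -- unique a with g.2 ∈ B₂ (x+y-a) a, unique b with g.2 ∈ T₂ (x+y-b) b
  obtain ⟨⟨b, hb, hbu⟩, ⟨a, ha, hau⟩⟩ := h22 (x + y) 0 g.2
  rw [zero_add] at ha
  rw [zero_add] at hb
  constructor
  · obtain ⟨s, hs, hsu⟩ := (h21 (x - a) (y - b) g.1).1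
    refine ⟨s, ?_, ?_⟩
    · simp only [prodTop, Finset.mem_biUnion, Finset.mem_univ, true_and,
        Finset.mem_product, Finset.mem_inter]
      refine ⟨a, b, ?_, ?_, ?_⟩
      · convert hs using 2 <;> ring
      · convert ha using 2; ring
      · convert hb using 2; ring
    · intro s' hs'
      simp only [prodTop, Finset.mem_biUnion, Finset.mem_univ, true_and,
        Finset.mem_product, Finset.mem_inter] at hs'
      obtain ⟨a', b', h1, h2, h3⟩ := hs'
      have haa : a' = a := by
        apply hau; rw [zero_add]; convert h2 using 2; ring
      have hbb : b' = b := by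
        apply hbu; rw [zero_add]; convert h3 using 2; ring
      subst haa; subst hbb
      apply hsu
      convert h1 using 2 <;> ring
  · obtain ⟨s, hs, hsu⟩ := (h21 (x - b) (y - a) g.1).2
    refine ⟨s, ?_, ?_⟩
    · simp only [prodBot, Finset.mem_biUnion, Finset.mem_univ, true_and,
        Finset.mem_product, Finset.mem_inter]
      refine ⟨a, b, ?_, ?_, ?_⟩
      · convert hs using 2 <;> ring
      · convert ha using 2; ring
      · convert hb using 2; ring
    · intro s' hs'
      simp only [prodBot, Finset.mem_biUnion, Finset.mem_univ, true_and,
        Finset.mem_product, Finset.mem_inter] at hs'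
      obtain ⟨a', b', h1, h2, h3⟩ := hs'
      have haa : a' = a := by
        apply hau; rw [zero_add]; convert h2 using 2; ring
      have hbb : b' = b := by
        apply hbu; rw [zero_add]; convert h3 using 2; ring
      subst haa; subst hbb
      apply hsu
      convert h1 using 2 <;> ring
end
end

section
/- Under the product construction, if ψ = (ψ₁,ψ₂) is a character of G₁ × G₂ with ψ₁ principal and ψ₂ non-principal, then ψ(⊤(x,y)) = u·ψ₂(⊤₂(x,y)) and ψ(⊥(x,y)) = u·ψ₂(⊥₂(x,y)); in particular these values lie in {0, uv, −uv}. -/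
open scoped Classical

noncomputable section

lemma sum_ite_unique {α : Type*} [Fintype α] {P : α → Prop} [DecidablePred P]
    {a₀ : α} (ha : P a₀) (hu : ∀ a, P a → a = a₀) (c : ℂ) :
    ∑ a, (if P a then c else 0) = c := by
  rw [Finset.sum_eq_single a₀]
  · rw [if_pos ha]
  · intro b _ hb
    exact if_neg fun h => hb (hu b h)
  · intro h; exact absurd (Finset.mem_univ a₀) h

lemma charSum_inter_partition {G : Type*} [AddCommGroup G] {m : ℕ} [NeZero m]
    (ψ : AddChar G ℂ) (F : ZMod m → Finset G) (hF : ∀ g, ∃! z, g ∈ F z) (C : Finset G) :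
    ∑ z : ZMod m, charSum ψ (F z ∩ C) = charSum ψ C := by
  unfold charSum
  have h1 : ∀ z, ∑ g ∈ F z ∩ C, ψ g = ∑ g ∈ C, if g ∈ F z then ψ g else 0 := by
    intro z
    rw [Finset.inter_comm, ← Finset.filter_mem_eq_inter, Finset.sum_filter]
  simp_rw [h1]
  rw [Finset.sum_comm]
  refine Finset.sum_congr rfl fun g _ => ?_
  obtain ⟨z₀, hz, hu⟩ := hF g
  exact sum_ite_unique (P := fun z => g ∈ F z) hz hu (ψ g)

lemma charSum_partition_zero {G : Type*} [AddCommGroup G] [Fintype G] {m : ℕ} [NeZero m]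
    (ψ : AddChar G ℂ) (hψ : ψ ≠ 1) (F : ZMod m → Finset G) (hF : ∀ g, ∃! z, g ∈ F z) :
    ∑ z : ZMod m, charSum ψ (F z) = 0 := by
  have h := charSum_inter_partition ψ F hF Finset.univ
  simp only [Finset.inter_univ] at h
  rw [h]
  unfold charSum
  exact AddChar.sum_eq_zero_iff_ne_zero.mpr hψ

lemma master {G₁ G₂ : Type*} [AddCommGroup G₂] {m : ℕ} [NeZero m] (ψ₂ : AddChar G₂ ℂ)
    (A : ZMod m → ZMod m → Finset G₁) (P Q : ZMod m → Finset G₂)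
    (hP : ∀ g, ∃! z, g ∈ P z) (hQ : ∀ g, ∃! z, g ∈ Q z) :
    ∑ g ∈ (Finset.univ.biUnion fun a : ZMod m => Finset.univ.biUnion fun b : ZMod m =>
        (A a b) ×ˢ (P a ∩ Q b)), ψ₂ g.2
      = ∑ a : ZMod m, ∑ b : ZMod m, ((A a b).card : ℂ) * charSum ψ₂ (P a ∩ Q b) := by
  rw [Finset.sum_biUnion]
  · refine Finset.sum_congr rfl fun a _ => ?_
    rw [Finset.sum_biUnion]
    · refine Finset.sum_congr rfl fun b _ => ?_
      rw [Finset.sum_product]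
      simp [charSum, Finset.sum_const, nsmul_eq_mul, Finset.mul_sum]
    · intro b _ b' _ hbb
      refine Finset.disjoint_left.mpr fun g hg hg' => ?_
      rw [Finset.mem_product, Finset.mem_inter] at hg hg'
      exact hbb ((hQ g.2).unique hg.2.2 hg'.2.2)
  · intro a _ a' _ haa
    refine Finset.disjoint_left.mpr fun g hg hg' => ?_
    simp only [Finset.mem_biUnion, Finset.mem_univ, true_and] at hg hg'
    obtain ⟨b, hb⟩ := hg; obtain ⟨b', hb'⟩ := hg'
    rw [Finset.mem_product, Finset.mem_inter] at hb hb'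
    exact haa ((hP g.2).unique hb.2.1 hb'.2.1)

lemma block_vals {G : Type*} [AddCommGroup G] {m v : ℕ} {T B : ZMod m → ZMod m → Finset G}
    (h3 : Cond3 m v T B) (ψ : AddChar G ℂ) (hψ : ψ ≠ 1) (x y : ZMod m) :
    (charSum ψ (T x y) = 0 ∨ charSum ψ (T x y) = (v : ℂ) ∨ charSum ψ (T x y) = -(v : ℂ)) ∧
    (charSum ψ (B x y) = 0 ∨ charSum ψ (B x y) = (v : ℂ) ∨ charSum ψ (B x y) = -(v : ℂ)) := by
  obtain ⟨⟨t1, t2, bb⟩, ht, -⟩ := h3 ψ hψ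
  have key : ∀ (F : ZMod m → ZMod m → Finset G),
      (∀ y' : ZMod m, y' ≠ t2 → charSum ψ (F t1 y') = -(v : ℂ)) →
      (∀ x' : ZMod m, x' ≠ t1 → charSum ψ (F x' t2) = (v : ℂ)) →
      (∀ x' y' : ZMod m, (x' = t1 ↔ y' = t2) → charSum ψ (F x' y') = 0) →
      (charSum ψ (F x y) = 0 ∨ charSum ψ (F x y) = (v : ℂ) ∨
        charSum ψ (F x y) = -(v : ℂ)) := by
    intro F hA hB hC
    by_cases hx : x = t1 <;> by_cases hy : y = t2
    · exact Or.inl (hC x y (by simp [hx, hy]))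
    · subst hx; exact Or.inr (Or.inr (hA y hy))
    · subst hy; exact Or.inr (Or.inl (hB x hx))
    · exact Or.inl (hC x y (by simp [hx, hy]))
  cases bb
  · exact ⟨Or.inl (ht.2.2.2 x y), key B ht.1 ht.2.1 ht.2.2.1⟩
  · exact ⟨key T ht.1 ht.2.1 ht.2.2.1, Or.inl (ht.2.2.2 x y)⟩

theorem stmt_15 {G₁ G₂ : Type*} [AddCommGroup G₁] [Fintype G₁] [AddCommGroup G₂] [Fintype G₂]
    (m u v : ℕ) [NeZero m]
    (hu : Fintype.card G₁ = u ^ 2) (hv : Fintype.card G₂ = v ^ 2)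
    (T₁ B₁ : ZMod m → ZMod m → Finset G₁) (T₂ B₂ : ZMod m → ZMod m → Finset G₂)
    (h11 : Cond1 m u T₁ B₁) (h21 : Cond2 m T₁ B₁) (h31 : Cond3 m u T₁ B₁)
    (h12 : Cond1 m v T₂ B₂) (h22 : Cond2 m T₂ B₂) (h32 : Cond3 m v T₂ B₂)
    (ψ₁ : AddChar G₁ ℂ) (ψ₂ : AddChar G₂ ℂ) (hψ₁ : ψ₁ = 1) (hψ₂ : ψ₂ ≠ 1) :
    ∀ x y : ZMod m,
      (∑ g ∈ prodTop m T₁ B₁ T₂ B₂ x y, ψ₁ g.1 * ψ₂ g.2) =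
          (u : ℂ) * charSum ψ₂ (T₂ x y) ∧
      (∑ g ∈ prodBot m T₁ B₁ T₂ B₂ x y, ψ₁ g.1 * ψ₂ g.2) =
          (u : ℂ) * charSum ψ₂ (B₂ x y) ∧
      (∑ g ∈ prodTop m T₁ B₁ T₂ B₂ x y, ψ₁ g.1 * ψ₂ g.2) ∈
          ({0, (u : ℂ) * v, -((u : ℂ) * v)} : Set ℂ) ∧
      (∑ g ∈ prodBot m T₁ B₁ T₂ B₂ x y, ψ₁ g.1 * ψ₂ g.2) ∈
          ({0, (u : ℂ) * v, -((u : ℂ) * v)} : Set ℂ) := by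
  intro x y
  subst hψ₁
  simp only [AddChar.one_apply, one_mul]
  have hPB : ∀ g : G₂, ∃! a : ZMod m, g ∈ B₂ (x + y - a) a := by
    intro g
    have h := (h22 (x + y) 0 g).2
    simpa using h
  have hQT : ∀ g : G₂, ∃! b : ZMod m, g ∈ T₂ (x + y - b) b := by
    intro g
    have h := (h22 (x + y) 0 g).1
    simpa using h
  set K : ℂ := ((u : ℂ) ^ 2 - u) / m with hK
  have castQ : ∀ (n : ℕ) (q : ℚ), (n : ℚ) = q → (n : ℂ) = (q : ℂ) := by
    intro n q h
    exact_mod_cast congrArg (fun r : ℚ => (r : ℂ)) h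
  have cardT : ∀ X Y : ZMod m, ((T₁ X Y).card : ℂ) = K + (if Y = 0 then (u : ℂ) else 0) := by
    intro X Y
    by_cases hY : Y = 0
    · rw [castQ _ _ ((h11 X Y).2 hY).1, if_pos hY, hK]; push_cast; ring
    · rw [castQ _ _ ((h11 X Y).1 hY).1, if_neg hY, hK]; push_cast; ring
  have cardB : ∀ X Y : ZMod m, ((B₁ X Y).card : ℂ) = K + (if Y = 0 then (u : ℂ) else 0) := by
    intro X Y
    by_cases hY : Y = 0
    · rw [castQ _ _ ((h11 X Y).2 hY).2, if_pos hY, hK]; push_cast; ring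
    · rw [castQ _ _ ((h11 X Y).1 hY).2, if_neg hY, hK]; push_cast; ring
  have hzero := charSum_partition_zero ψ₂ hψ₂ (fun b => T₂ (x + y - b) b) hQT
  have hzero' := charSum_partition_zero ψ₂ hψ₂ (fun a => B₂ (x + y - a) a) hPB
  have hTop : (∑ g ∈ prodTop m T₁ B₁ T₂ B₂ x y, ψ₂ g.2) = (u : ℂ) * charSum ψ₂ (T₂ x y) := by
    rw [show prodTop m T₁ B₁ T₂ B₂ x y = Finset.univ.biUnion
        (fun a : ZMod m => Finset.univ.biUnion fun b : ZMod m =>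
          (T₁ (x - a) (y - b)) ×ˢ ((B₂ (x + y - a) a) ∩ (T₂ (x + y - b) b))) from rfl]
    rw [master ψ₂ (fun a b => T₁ (x - a) (y - b)) (fun a => B₂ (x + y - a) a)
        (fun b => T₂ (x + y - b) b) hPB hQT]
    rw [Finset.sum_comm]
    have step : ∀ b : ZMod m,
        (∑ a : ZMod m, ((T₁ (x - a) (y - b)).card : ℂ) *
          charSum ψ₂ (B₂ (x + y - a) a ∩ T₂ (x + y - b) b))
        = (K + if b = y then (u : ℂ) else 0) * charSum ψ₂ (T₂ (x + y - b) b) := by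
      intro b
      have hc : ∀ a : ZMod m, ((T₁ (x - a) (y - b)).card : ℂ)
          = K + if b = y then (u : ℂ) else 0 := by
        intro a
        rw [cardT]
        congr 1
        simp [sub_eq_zero, eq_comm]
      simp_rw [hc]
      rw [← Finset.mul_sum, charSum_inter_partition ψ₂ _ hPB]
    simp_rw [step, add_mul, ite_mul, zero_mul]
    rw [Finset.sum_add_distrib, ← Finset.mul_sum, hzero, mul_zero, zero_add,
      Finset.sum_ite_eq' Finset.univ y
        (fun b => (u : ℂ) * charSum ψ₂ (T₂ (x + y - b) b))]
    simp [add_sub_cancel_right]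
  have hBot : (∑ g ∈ prodBot m T₁ B₁ T₂ B₂ x y, ψ₂ g.2) = (u : ℂ) * charSum ψ₂ (B₂ x y) := by
    rw [show prodBot m T₁ B₁ T₂ B₂ x y = Finset.univ.biUnion
        (fun a : ZMod m => Finset.univ.biUnion fun b : ZMod m =>
          (B₁ (x - b) (y - a)) ×ˢ ((B₂ (x + y - a) a) ∩ (T₂ (x + y - b) b))) from rfl]
    rw [master ψ₂ (fun a b => B₁ (x - b) (y - a)) (fun a => B₂ (x + y - a) a)
        (fun b => T₂ (x + y - b) b) hPB hQT]
    have step : ∀ a : ZMod m,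
        (∑ b : ZMod m, ((B₁ (x - b) (y - a)).card : ℂ) *
          charSum ψ₂ (B₂ (x + y - a) a ∩ T₂ (x + y - b) b))
        = (K + if a = y then (u : ℂ) else 0) * charSum ψ₂ (B₂ (x + y - a) a) := by
      intro a
      have hc : ∀ b : ZMod m, ((B₁ (x - b) (y - a)).card : ℂ)
          = K + if a = y then (u : ℂ) else 0 := by
        intro b
        rw [cardB]
        congr 1
        simp [sub_eq_zero, eq_comm]
      simp_rw [hc, Finset.inter_comm (B₂ (x + y - a) a)]
      rw [← Finset.mul_sum, charSum_inter_partition ψ₂ _ hQT]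
    simp_rw [step, add_mul, ite_mul, zero_mul]
    rw [Finset.sum_add_distrib, ← Finset.mul_sum, hzero', mul_zero, zero_add,
      Finset.sum_ite_eq' Finset.univ y
        (fun a => (u : ℂ) * charSum ψ₂ (B₂ (x + y - a) a))]
    simp [add_sub_cancel_right]
  obtain ⟨hTv, hBv⟩ := block_vals h32 ψ₂ hψ₂ x y
  refine ⟨hTop, hBot, ?_, ?_⟩
  · rw [hTop]
    simp only [Set.mem_insert_iff, Set.mem_singleton_iff]
    rcases hTv with h | h | h <;> rw [h]
    · exact Or.inl (mul_zero _)
    · exact Or.inr (Or.inl rfl)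
    · exact Or.inr (Or.inr (mul_neg _ _))
  · rw [hBot]
    simp only [Set.mem_insert_iff, Set.mem_singleton_iff]
    rcases hBv with h | h | h <;> rw [h]
    · exact Or.inl (mul_zero _)
    · exact Or.inr (Or.inl rfl)
    · exact Or.inr (Or.inr (mul_neg _ _))
end
end

section
/- Let m be a positive integer, q a prime power with 2m | q+1, and define in G = (F_{q⁴},+) the sets ⊤(x,y) and ⊥(x,y) (x,y ∈ Z_m) from cyclotomic classes as in the semi-primitive construction. Then for each x ∈ Z_m, the set S_x = C_{σ₀⁻¹(x)}^{(2m,q⁴)} ∪ C_{σ₁⁻¹(x)}^{(2m,q⁴)} satisfies the group ring identity Σ_{y∈Z_m}(⊤(x,y)+⊥(x,y)) = m·S_x + G + [0_G] in Z[G]. -/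
open scoped Classical

noncomputable section

/-- The building block `⊤(x,y) = C_{σ₁⁻¹(x)}^{(2m)} ∪ ⋃_{i ∈ A_y} C_i^{(q²+1)}`,
with `{0}` adjoined when `y = 0`. -/
def TopC {F : Type*} [Field F] [Fintype F] (ω : F) (m q : ℕ)
    (σ₁inv : ZMod m → ℕ) (A : ZMod m → Finset ℕ) (x y : ZMod m) : Finset F :=
  cycl ω (2 * m) (σ₁inv x) ∪ (A y).biUnion (fun i => cycl ω (q ^ 2 + 1) i) ∪
    (if y = 0 then {0} else ∅)

/-- The building block `⊥(x,y) = C_{σ₀⁻¹(x)}^{(2m)} ∪ ⋃_{i ∈ B_y} C_i^{(q²+1)}`,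
with `{0}` adjoined when `y = 0`. -/
def BotC {F : Type*} [Field F] [Fintype F] (ω : F) (m q : ℕ)
    (σ₀inv : ZMod m → ℕ) (B : ZMod m → Finset ℕ) (x y : ZMod m) : Finset F :=
  cycl ω (2 * m) (σ₀inv x) ∪ (B y).biUnion (fun i => cycl ω (q ^ 2 + 1) i) ∪
    (if y = 0 then {0} else ∅)

lemma phi_spec (M x : ℕ) (hx : x < M) :
    (M/2 + M - x) % M = if x ≤ M/2 then M/2 - x else M/2 + M - x := by
  rcases le_or_gt x (M/2) with h | h
  · rw [if_pos h]
    have h1 : M/2 + M - x = M + (M/2 - x) := by omega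
    rw [h1, Nat.add_mod_left, Nat.mod_eq_of_lt (by omega)]
  · rw [if_neg (by omega), Nat.mod_eq_of_lt (by omega)]

lemma phi_invol (M x : ℕ) (hx : x < M) :
    (M/2 + M - ((M/2 + M - x) % M)) % M = x := by
  rw [phi_spec M x hx]
  rcases le_or_gt x (M/2) with h | h
  · rw [if_pos h, phi_spec M _ (by omega), if_pos (by omega)]
    omega
  · rw [if_neg (by omega), phi_spec M _ (by omega), if_neg (by omega)]
    omega

lemma phi_parity (M x : ℕ) (hodd : M / 2 % 2 = 1) (h2 : 2 ∣ M) (hx : x < M) :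
    (M/2 + M - x) % M % 2 = (x + 1) % 2 := by
  rw [phi_spec M x hx]
  split_ifs <;> omega

lemma ite_or_add (P Q : Prop) [Decidable P] [Decidable Q] (h : ¬(P ∧ Q)) :
    (if P ∨ Q then (1:ℤ) else 0) = (if P then 1 else 0) + (if Q then 1 else 0) := by
  by_cases hP : P <;> by_cases hQ : Q <;> simp [hP, hQ]
  exact h ⟨hP, hQ⟩

lemma sum_ind_disj {m : ℕ} [NeZero m] (A : ZMod m → Finset ℕ)
    (hd : ∀ x x' : ZMod m, x ≠ x' → Disjoint (A x) (A x')) (n : ℕ) :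
    (∑ y : ZMod m, (if n ∈ A y then (1:ℤ) else 0)) =
      if n ∈ Finset.univ.biUnion A then 1 else 0 := by
  by_cases hn : n ∈ Finset.univ.biUnion A
  · rw [if_pos hn]
    obtain ⟨y₀, -, hy₀⟩ := Finset.mem_biUnion.mp hn
    rw [Finset.sum_eq_single y₀]
    · rw [if_pos hy₀]
    · intro y _ hne
      rw [if_neg]
      exact fun h => Finset.disjoint_left.mp (hd y y₀ hne) h hy₀
    · exact fun h => absurd (Finset.mem_univ y₀) h
  · rw [if_neg hn, Finset.sum_eq_zero]
    intro y _
    rw [if_neg]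
    exact fun h => hn (Finset.mem_biUnion.mpr ⟨y, Finset.mem_univ y, h⟩)

lemma mem_cycl_iff {F : Type*} [Field F] [Fintype F] (u : Fˣ) (N : ℕ)
    (hord : orderOf u = N) (hN1 : 0 < N) (M i e : ℕ) (hM : M ∣ N) :
    ((u : F) ^ e ∈ cycl (u : F) M i) ↔ e % M = i % M := by
  simp only [cycl, Finset.mem_filter, Finset.mem_univ, true_and]
  have coe : ∀ a b : ℕ, ((u:F) ^ a = (u:F) ^ b) ↔ u ^ a = u ^ b := by
    intro a b
    rw [← Units.val_pow_eq_pow_val, ← Units.val_pow_eq_pow_val]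
    exact ⟨fun h => Units.ext h, fun h => congrArg Units.val h⟩
  constructor
  · rintro ⟨k, hk⟩
    have h2 : u ^ e = u ^ (i + M * k) := (coe e (i + M*k)).mp hk
    have h3 : e ≡ i + M * k [MOD N] := by
      rw [← hord]; exact pow_eq_pow_iff_modEq.mp h2
    have h4 : e ≡ i + M * k [MOD M] := h3.of_dvd hM
    calc e % M = (i + M * k) % M := h4
      _ = i % M := Nat.add_mul_mod_self_left i M k
  · intro h
    have hN1' : i + 1 ≤ (i+1) * N := Nat.le_mul_of_pos_right (i+1) hN1
    have hile : i ≤ e + (i+1)*N := by omega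
    obtain ⟨c, hc⟩ : M ∣ (i+1)*N := Dvd.dvd.mul_left hM (i+1)
    have h3 : (e + (i+1)*N) % M = i % M := by
      rw [hc, Nat.add_mul_mod_self_left] at *
      exact h
    have hMdvd' : M ∣ e + (i+1)*N - i :=
      (Nat.modEq_iff_dvd' hile).mp (h3.symm : Nat.ModEq M i (e + (i+1)*N))
    refine ⟨(e + (i+1)*N - i)/M, ?_⟩
    have hk : i + M * ((e + (i+1)*N - i)/M) = e + (i+1)*N := by
      rw [Nat.mul_div_cancel' hMdvd']; omega
    rw [hk]
    have hpow : u ^ (e + (i+1)*N) = u ^ e := by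
      rw [pow_add, mul_comm (i+1) N, pow_mul, ← hord, pow_orderOf_eq_one, one_pow, mul_one]
    exact (coe e _).mpr hpow.symm

theorem stmt_16 (p : ℕ) [Fact p.Prime] (f : ℕ) (hf : 0 < f) (q : ℕ) (hq : q = p ^ f)
    (m : ℕ) [NeZero m] (hdvd : 2 * m ∣ q + 1)
    {F : Type*} [Field F] [Fintype F] (hcard : Fintype.card F = q ^ 4)
    (ω : F) (hω : ∀ x : F, x ≠ 0 → ∃ k : ℕ, x = ω ^ k)
    (A : ZMod m → Finset ℕ)
    -- the `A x` partition the even residues `{0, 2, …, q²−1}` modulo `q²+1`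
    (hAsub : ∀ x : ZMod m, A x ⊆ (Finset.range (q ^ 2 + 1)).filter (fun n => Even n))
    (hAdisj : ∀ x x' : ZMod m, x ≠ x' → Disjoint (A x) (A x'))
    (hAcover : Finset.univ.biUnion A = (Finset.range (q ^ 2 + 1)).filter (fun n => Even n))
    (hA0 : (A 0).card = (q ^ 2 - 1) / (2 * m) + 1)
    (hAx : ∀ x : ZMod m, x ≠ 0 → (A x).card = (q ^ 2 - 1) / (2 * m))
    (B : ZMod m → Finset ℕ)
    -- `B_x = {−a + (q²+1)/2 mod (q²+1) : a ∈ A_x}`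
    (hB : ∀ x : ZMod m,
      B x = (A x).image (fun a => ((q ^ 2 + 1) / 2 + (q ^ 2 + 1) - a) % (q ^ 2 + 1)))
    (σ₀inv σ₁inv : ZMod m → ℕ)
    -- `σ₀` is a bijection from the even residues modulo `2m` onto `Z_m`
    (hσ₀inj : Function.Injective σ₀inv)
    (hσ₀ : ∀ x : ZMod m, Even (σ₀inv x) ∧ σ₀inv x < 2 * m)
    -- `σ₁` is a bijection from the odd residues modulo `2m` onto `Z_m`
    (hσ₁inj : Function.Injective σ₁inv)
    (hσ₁ : ∀ x : ZMod m, Odd (σ₁inv x) ∧ σ₁inv x < 2 * m) :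
    ∀ x : ZMod m, ∀ g : F,
      (∑ y : ZMod m, (ind (TopC ω m q σ₁inv A x y) g + ind (BotC ω m q σ₀inv B x y) g)) =
        m * ind (cycl ω (2 * m) (σ₀inv x) ∪ cycl ω (2 * m) (σ₁inv x)) g + 1 +
          (if g = 0 then 1 else 0) := by
  intro x g
  -- basic arithmetic facts
  have hp2 : 2 ≤ p := (Fact.out : p.Prime).two_le
  have hq2 : 2 ≤ q := by
    rw [hq]
    calc 2 = 2^1 := rfl
      _ ≤ p^1 := Nat.pow_le_pow_left hp2 1
      _ ≤ p^f := Nat.pow_le_pow_right (by omega) hf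
  have hm1 : 1 ≤ m := Nat.pos_of_ne_zero (NeZero.ne m)
  have h2q : 2 ∣ q + 1 := dvd_trans ⟨m, rfl⟩ hdvd
  obtain ⟨d, hd⟩ := h2q
  obtain ⟨t, ht⟩ : ∃ t, q = 2*t + 1 := ⟨q/2, by omega⟩
  obtain ⟨s, hs⟩ : ∃ s, q^2 = 4*s + 4*t + 1 := ⟨t*t, by rw [ht]; ring⟩
  have hM2 : 2 ∣ q^2 + 1 := by rw [hs]; omega
  have hModd : (q^2 + 1) / 2 % 2 = 1 := by rw [hs]; omega
  have hMpos : 0 < q^2 + 1 := by omega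
  have hq21 : 1 ≤ q^2 := by rw [hs]; omega
  have hq41 : 1 ≤ q^4 := Nat.one_le_pow _ _ (by omega)
  have hfac : q^4 - 1 = (q^2+1) * (q^2 - 1) := by zify [hq21, hq41]; ring
  have hfac2 : q^2 - 1 = (q+1) * (q-1) := by
    zify [hq21, show 1 ≤ q from by omega]; ring
  have hcard3 : 3 ≤ Fintype.card F := by
    rw [hcard]
    calc (3:ℕ) ≤ 2^4 := by norm_num
      _ ≤ q^4 := Nat.pow_le_pow_left hq2 4
  have hNval : Fintype.card F - 1 = q^4 - 1 := by rw [hcard]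
  have hN1 : 0 < Fintype.card F - 1 := by omega
  have hMN : (q^2+1) ∣ Fintype.card F - 1 := by
    rw [hNval, hfac]; exact dvd_mul_right _ _
  have hmN : 2*m ∣ Fintype.card F - 1 := by
    rw [hNval, hfac, hfac2]
    exact Dvd.dvd.mul_left (hdvd.mul_right (q-1)) (q^2+1)
  have h2m2 : 2 ∣ 2*m := ⟨m, rfl⟩
  have h2mpos : 0 < 2*m := by omega
  -- ω is nonzero, hence a unit generating Fˣ
  have hω0 : ω ≠ 0 := by
    intro h0
    obtain ⟨x₀, hx₀0, hx₀1⟩ : ∃ x₀ : F, x₀ ≠ 0 ∧ x₀ ≠ 1 := by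
      have hsub : ¬ (Finset.univ : Finset F) ⊆ {0, 1} := by
        intro hsub
        have h1 := Finset.card_le_card hsub
        have h2 : ({0,1} : Finset F).card ≤ 2 :=
          (Finset.card_insert_le _ _).trans (by simp)
        rw [Finset.card_univ] at h1
        omega
      obtain ⟨x₀, -, hx₀⟩ := Finset.not_subset.mp hsub
      simp only [Finset.mem_insert, Finset.mem_singleton, not_or] at hx₀
      exact ⟨x₀, hx₀.1, hx₀.2⟩
    obtain ⟨k, hk⟩ := hω x₀ hx₀0
    rw [h0] at hk
    rcases Nat.eq_zero_or_pos k with hk0 | hk0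
    · rw [hk0, pow_zero] at hk; exact hx₀1 hk
    · rw [zero_pow (by omega)] at hk; exact hx₀0 hk
  set u : Fˣ := Units.mk0 ω hω0 with hu
  have huv : (u : F) = ω := rfl
  have hord : orderOf u = Fintype.card F - 1 := by
    have hgen : ∀ v : Fˣ, v ∈ Subgroup.zpowers u := by
      intro v
      obtain ⟨k, hk⟩ := hω v v.ne_zero
      have hk' : u ^ k = v := Units.ext (by rw [Units.val_pow_eq_pow_val, huv, ← hk])
      rw [← hk']
      exact Subgroup.npow_mem_zpowers u k
    refine (orderOf_eq_card_of_forall_mem_zpowers hgen).trans ?_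
    classical
    exact (Nat.card_eq_fintype_card).trans
      ((Fintype.card_congr (Equiv.refl _)).trans (Fintype.card_units (α := F)))
  have hmem : ∀ (M' i : ℕ), M' ∣ Fintype.card F - 1 → ∀ e : ℕ,
      ((ω:F)^e ∈ cycl ω M' i ↔ e % M' = i % M') := by
    intro M' i hM' e
    rw [← huv]
    exact mem_cycl_iff u _ hord hN1 M' i e hM'
  have h0cycl : ∀ (M' i : ℕ), (0:F) ∉ cycl ω M' i := by
    intro M' i h
    simp only [cycl, Finset.mem_filter, Finset.mem_univ, true_and] at h
    obtain ⟨k, hk⟩ := h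
    rcases Nat.eq_zero_or_pos (i + M'*k) with h0 | h0
    · rw [h0, pow_zero] at hk; exact zero_ne_one hk
    · exact hω0 ((pow_eq_zero_iff (Nat.pos_iff_ne_zero.mp h0)).mp hk.symm)
  by_cases hg0 : g = 0
  · -- the case g = 0
    subst hg0
    have hTop : ∀ y, ind (TopC ω m q σ₁inv A x y) (0:F) = if y = 0 then 1 else 0 := by
      intro y
      unfold ind TopC
      by_cases hy : y = 0 <;>
        simp [hy, Finset.mem_union, Finset.mem_biUnion, h0cycl]
    have hBot : ∀ y, ind (BotC ω m q σ₀inv B x y) (0:F) = if y = 0 then 1 else 0 := by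
      intro y
      unfold ind BotC
      by_cases hy : y = 0 <;>
        simp [hy, Finset.mem_union, Finset.mem_biUnion, h0cycl]
    rw [Finset.sum_congr rfl (fun y _ => by rw [hTop y, hBot y])]
    rw [ind, if_neg (by
      simp only [Finset.mem_union]
      push_neg
      exact ⟨h0cycl _ _, h0cycl _ _⟩)]
    simp [Finset.sum_add_distrib, Finset.sum_ite_eq' Finset.univ (0 : ZMod m)]
  · -- the case g ≠ 0
    obtain ⟨e, he⟩ := hω g hg0
    obtain ⟨n, hn⟩ : ∃ n, n = e % (q^2+1) := ⟨_, rfl⟩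
    have hnlt : n < q^2+1 := hn ▸ Nat.mod_lt e hMpos
    have hnpar : n % 2 = e % 2 := by rw [hn]; exact Nat.mod_mod_of_dvd e hM2
    -- membership in the 2m-classes
    have hmem2m : ∀ j : ℕ, (g ∈ cycl ω (2*m) j ↔ e % (2*m) = j % (2*m)) := by
      intro j; rw [he]; exact hmem (2*m) j hmN e
    -- membership in the A-part
    have hAlt : ∀ y, ∀ i ∈ A y, i < q^2+1 ∧ i % 2 = 0 := by
      intro y i hi
      have := hAsub y hi
      simp only [Finset.mem_filter, Finset.mem_range] at this
      exact ⟨this.1, Nat.even_iff.mp this.2⟩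
    have hA' : ∀ y, (g ∈ (A y).biUnion (fun i => cycl ω (q^2+1) i)) ↔ n ∈ A y := by
      intro y
      rw [Finset.mem_biUnion]
      constructor
      · rintro ⟨i, hi, hmemi⟩
        rw [he, hmem (q^2+1) i hMN e, Nat.mod_eq_of_lt (hAlt y i hi).1] at hmemi
        rwa [hn, hmemi]
      · intro hny
        refine ⟨n, hny, ?_⟩
        rw [he, hmem (q^2+1) n hMN e, Nat.mod_eq_of_lt hnlt]
        exact hn.symm
    -- membership in the B-part
    have hB' : ∀ y, (g ∈ (B y).biUnion (fun i => cycl ω (q^2+1) i)) ↔ n ∈ B y := by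
      intro y
      rw [Finset.mem_biUnion]
      constructor
      · rintro ⟨i, hi, hmemi⟩
        have hilt : i < q^2+1 := by
          rw [hB y] at hi
          obtain ⟨a, -, ha⟩ := Finset.mem_image.mp hi
          rw [← ha]
          exact Nat.mod_lt _ hMpos
        rw [he, hmem (q^2+1) i hMN e, Nat.mod_eq_of_lt hilt] at hmemi
        rwa [hn, hmemi]
      · intro hny
        refine ⟨n, hny, ?_⟩
        rw [he, hmem (q^2+1) n hMN e, Nat.mod_eq_of_lt hnlt]
        exact hn.symm
    -- parity of elements of B y
    have hBpar : ∀ y, ∀ i ∈ B y, i % 2 = 1 := by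
      intro y i hi
      rw [hB y] at hi
      obtain ⟨a, ha, rfl⟩ := Finset.mem_image.mp hi
      have h1 := phi_parity (q^2+1) a hModd hM2 (hAlt y a ha).1
      have h2 := (hAlt y a ha).2
      omega
    -- the 0-part contributes nothing
    have hzero : ∀ y : ZMod m, (g ∈ (if y = (0 : ZMod m) then ({0} : Finset F) else ∅)) ↔ False := by
      intro y
      split_ifs <;> simp [hg0]
    -- indicator of TopC
    have hTop : ∀ y, ind (TopC ω m q σ₁inv A x y) g =
        (if e % (2*m) = σ₁inv x % (2*m) then (1:ℤ) else 0) +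
        (if n ∈ A y then (1:ℤ) else 0) := by
      intro y
      have hcond : g ∈ TopC ω m q σ₁inv A x y ↔
          (e % (2*m) = σ₁inv x % (2*m) ∨ n ∈ A y) := by
        unfold TopC
        rw [Finset.mem_union, Finset.mem_union, hmem2m, hA' y]
        rcases eq_or_ne y 0 with hy | hy
        · simp [hy, hg0]
        · simp [hy]
      rw [ind]
      rw [if_congr hcond rfl rfl]
      apply ite_or_add
      rintro ⟨hP, hQ⟩
      have h1 := congrArg (· % 2) hP
      simp only [Nat.mod_mod_of_dvd _ h2m2] at h1
      have h2 : σ₁inv x % 2 = 1 := Nat.odd_iff.mp (hσ₁ x).1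
      have h3 : n % 2 = 0 := (hAlt y n hQ).2
      omega
    have hBot : ∀ y, ind (BotC ω m q σ₀inv B x y) g =
        (if e % (2*m) = σ₀inv x % (2*m) then (1:ℤ) else 0) +
        (if n ∈ B y then (1:ℤ) else 0) := by
      intro y
      have hcond : g ∈ BotC ω m q σ₀inv B x y ↔
          (e % (2*m) = σ₀inv x % (2*m) ∨ n ∈ B y) := by
        unfold BotC
        rw [Finset.mem_union, Finset.mem_union, hmem2m, hB' y]
        rcases eq_or_ne y 0 with hy | hy
        · simp [hy, hg0]
        · simp [hy]
      rw [ind]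
      rw [if_congr hcond rfl rfl]
      apply ite_or_add
      rintro ⟨hP, hQ⟩
      have h1 := congrArg (· % 2) hP
      simp only [Nat.mod_mod_of_dvd _ h2m2] at h1
      have h2 : σ₀inv x % 2 = 0 := Nat.even_iff.mp (hσ₀ x).1
      have h3 : n % 2 = 1 := hBpar y n hQ
      omega
    -- disjointness of the B's
    have hBdisj : ∀ y y' : ZMod m, y ≠ y' → Disjoint (B y) (B y') := by
      intro y y' hne
      rw [Finset.disjoint_left]
      intro a haB haB'
      rw [hB y] at haB
      rw [hB y'] at haB'
      obtain ⟨b, hb, hb2⟩ := Finset.mem_image.mp haB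
      obtain ⟨b', hb', hb2'⟩ := Finset.mem_image.mp haB'
      have hbe : b = b' := by
        have e1 := phi_invol (q^2+1) b (hAlt y b hb).1
        have e2 := phi_invol (q^2+1) b' (hAlt y' b' hb').1
        rw [hb2] at e1
        rw [hb2'] at e2
        rw [← e1, ← e2]
      rw [hbe] at hb
      exact Finset.disjoint_left.mp (hAdisj y y' hne) hb hb'
    -- summing the A-part
    have hsumA : (∑ y : ZMod m, (if n ∈ A y then (1:ℤ) else 0)) =
        if n % 2 = 0 then 1 else 0 := by
      rw [sum_ind_disj A hAdisj n]
      have : (n ∈ Finset.univ.biUnion A) ↔ n % 2 = 0 := by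
        rw [hAcover]
        simp [Finset.mem_filter, Finset.mem_range, hnlt, Nat.even_iff]
      rw [if_congr this rfl rfl]
    -- summing the B-part
    have hsumB : (∑ y : ZMod m, (if n ∈ B y then (1:ℤ) else 0)) =
        if n % 2 = 1 then 1 else 0 := by
      rw [sum_ind_disj B hBdisj n]
      have : (n ∈ Finset.univ.biUnion B) ↔ n % 2 = 1 := by
        constructor
        · intro hnB
          obtain ⟨y, -, hy⟩ := Finset.mem_biUnion.mp hnB
          exact hBpar y n hy
        · intro hodd
          have ha2 : ((q^2+1)/2 + (q^2+1) - n) % (q^2+1) % 2 = 0 := by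
            have := phi_parity (q^2+1) n hModd hM2 hnlt
            omega
          have halt : ((q^2+1)/2 + (q^2+1) - n) % (q^2+1) < q^2+1 :=
            Nat.mod_lt _ hMpos
          have haA : ((q^2+1)/2 + (q^2+1) - n) % (q^2+1) ∈ Finset.univ.biUnion A := by
            rw [hAcover]
            simp only [Finset.mem_filter, Finset.mem_range]
            exact ⟨halt, Nat.even_iff.mpr ha2⟩
          obtain ⟨y, -, hy⟩ := Finset.mem_biUnion.mp haA
          refine Finset.mem_biUnion.mpr ⟨y, Finset.mem_univ y, ?_⟩
          rw [hB y]
          refine Finset.mem_image.mpr ⟨_, hy, ?_⟩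
          exact phi_invol (q^2+1) n hnlt
      rw [if_congr this rfl rfl]
    -- indicator of the union on the right-hand side
    have hunion : ind (cycl ω (2*m) (σ₀inv x) ∪ cycl ω (2*m) (σ₁inv x)) g =
        (if e % (2*m) = σ₀inv x % (2*m) then (1:ℤ) else 0) +
        (if e % (2*m) = σ₁inv x % (2*m) then (1:ℤ) else 0) := by
      rw [ind]
      rw [if_congr (by rw [Finset.mem_union, hmem2m, hmem2m]) rfl rfl]
      apply ite_or_add
      rintro ⟨hP, hQ⟩
      have h1 := congrArg (· % 2) hP
      have h2 := congrArg (· % 2) hQ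
      simp only [Nat.mod_mod_of_dvd _ h2m2] at h1 h2
      have h3 : σ₀inv x % 2 = 0 := Nat.even_iff.mp (hσ₀ x).1
      have h4 : σ₁inv x % 2 = 1 := Nat.odd_iff.mp (hσ₁ x).1
      omega
    -- put everything together
    rw [Finset.sum_congr rfl (fun y _ => by rw [hTop y, hBot y])]
    have hsplit : (∑ y : ZMod m,
        (((if e % (2*m) = σ₁inv x % (2*m) then (1:ℤ) else 0) + (if n ∈ A y then (1:ℤ) else 0)) +
         ((if e % (2*m) = σ₀inv x % (2*m) then (1:ℤ) else 0) + (if n ∈ B y then (1:ℤ) else 0)))) =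
        (∑ y : ZMod m, ((if e % (2*m) = σ₁inv x % (2*m) then (1:ℤ) else 0) +
            (if e % (2*m) = σ₀inv x % (2*m) then (1:ℤ) else 0))) +
        ((∑ y : ZMod m, (if n ∈ A y then (1:ℤ) else 0)) +
         (∑ y : ZMod m, (if n ∈ B y then (1:ℤ) else 0))) := by
      rw [← Finset.sum_add_distrib, ← Finset.sum_add_distrib]
      exact Finset.sum_congr rfl fun y _ => by ring
    rw [hsplit, hsumA, hsumB]
    have h01 : (if n % 2 = 0 then (1:ℤ) else 0) + (if n % 2 = 1 then (1:ℤ) else 0) = 1 := by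
      rcases Nat.mod_two_eq_zero_or_one n with h | h <;> simp [h]
    rw [h01, Finset.sum_const, Finset.card_univ, ZMod.card, nsmul_eq_mul]
    rw [hunion, if_neg hg0]
    ring
end
end
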